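/- arXiv:2505.05807 — 9 statements merged into one kernel-verified Lean document; each statement's English description precedes it below -/
import Mathlib

section
/- Let T be a tree on n ≥ 1 vertices and v a vertex of T. Form the graph T_v by deleting v, adding two new vertices v₁, v₂ joined by an edge, and joining both v₁ and v₂ to every neighbor of v in T. Then the number of proper k-colorings of T_v equals k·(k-1)^(n-deg(v))·(k-2)^(deg(v)). -/
/-- The number of proper `k`-colorings of a simple graph `G`. -/
noncomputable def numColorings {V : Type} (G : SimpleGraph V) (k : ℕ) : ℕ :=
  Nat.card {f : V → Fin k // ∀ u w, G.Adj u w → f u ≠ f w}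

/-- The `K_r`-shadow graph of `G` at the vertex `v`: delete `v`, add an `r`-clique of
new vertices, and join each new vertex to every neighbor of `v` in `G`. -/
def cliqueShadow {V : Type} (G : SimpleGraph V) (v : V) (r : ℕ) :
    SimpleGraph ({u : V // u ≠ v} ⊕ Fin r) :=
  SimpleGraph.fromRel (fun x y =>
    match x, y with
    | Sum.inl a, Sum.inl b => G.Adj a.1 b.1
    | Sum.inl a, Sum.inr _ => G.Adj a.1 v
    | Sum.inr _, Sum.inl _ => False
    | Sum.inr _, Sum.inr _ => True)

open SimpleGraph

def PColor {V : Type} (T : SimpleGraph V) (v : V) {k : ℕ} (c1 c2 : Fin k)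
    (f : V → Fin k) : Prop :=
  (∀ a b, T.Adj a b → f a ≠ f b) ∧ f v = c1 ∧ ∀ u, T.Adj v u → f u ≠ c2


open SimpleGraph

lemma card_ne_one {k : ℕ} (a : Fin k) : Nat.card {c : Fin k // c ≠ a} = k - 1 := by
  classical
  rw [Nat.card_eq_fintype_card, Fintype.card_subtype_compl, Fintype.card_subtype_eq,
    Fintype.card_fin]

lemma card_ne_two {k : ℕ} (a b : Fin k) (hab : a ≠ b) :
    Nat.card {c : Fin k // c ≠ a ∧ c ≠ b} = k - 2 := by
  classical
  rw [Nat.card_eq_fintype_card, Fintype.card_subtype]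
  have : (Finset.univ.filter fun c : Fin k => c ≠ a ∧ c ≠ b) = Finset.univ \ {a, b} := by
    ext c; simp [and_comm]
  rw [this, Finset.card_sdiff_of_subset (Finset.subset_univ _), Finset.card_pair hab,
    Finset.card_univ, Fintype.card_fin]

lemma ncard_nbhd_lt {V : Type} (T : SimpleGraph V) [Fintype V] (v : V) :
    (T.neighborSet v).ncard + 1 ≤ Fintype.card V := by
  classical
  have h1 : (insert v (T.neighborSet v)).ncard = (T.neighborSet v).ncard + 1 :=
    Set.ncard_insert_of_notMem (by simp) (Set.toFinite _)
  have h2 : (insert v (T.neighborSet v)).ncard ≤ (Set.univ : Set V).ncard :=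
    Set.ncard_le_ncard (Set.subset_univ _) (Set.toFinite _)
  rw [Set.ncard_univ, Nat.card_eq_fintype_card] at h2
  omega

lemma card_sigma_const {I : Type} [Finite I] {F : I → Type} [∀ i, Finite (F i)] {m : ℕ}
    (h : ∀ i, Nat.card (F i) = m) : Nat.card (Σ i, F i) = Nat.card I * m := by
  classical
  cases nonempty_fintype I
  have inst : ∀ i, Fintype (F i) := fun i => Fintype.ofFinite _
  rw [Nat.card_eq_fintype_card, Fintype.card_sigma, Nat.card_eq_fintype_card]
  calc (∑ i, Fintype.card (F i)) = ∑ _i : I, m := by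
        refine Finset.sum_congr rfl fun i _ => ?_
        rw [← h i, Nat.card_eq_fintype_card]
      _ = Fintype.card I * m := by simp [Finset.sum_const, Finset.card_univ, mul_comm]


open SimpleGraph

section
variable {V : Type} {T : SimpleGraph V}

lemma reachable_comap {u w : V} (hu : ∀ x, T.Adj u x → x = w) :
    ∀ {a b : V} (p : T.Walk a b), p.IsPath → ∀ (ha : a ≠ u) (hb : b ≠ u),
      (T.comap (Subtype.val : {x : V // x ≠ u} → V)).Reachable ⟨a, ha⟩ ⟨b, hb⟩ := by
  intro a b p
  induction p with
  | nil => intro _ ha hb; exact Reachable.refl _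
  | @cons a c b h q ih =>
    intro hp ha hb
    by_cases hc : c = u
    · subst hc
      cases q with
      | nil => exact absurd rfl hb
      | @cons _ c' _ h' q' =>
        exfalso
        have hc' : c' = w := hu c' h'
        have haw : a = w := hu a h.symm
        have : a ∈ (Walk.cons h' q').support := by
          rw [haw, ← hc']
          simp [Walk.support_cons, Walk.start_mem_support]
        exact ((Walk.cons_isPath_iff _ _).mp hp).2 this
    · have hadj : (T.comap (Subtype.val : {x : V // x ≠ u} → V)).Adj ⟨a, ha⟩ ⟨c, hc⟩ := h
      exact hadj.reachable.trans (ih hp.of_cons hc hb)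

lemma comap_isTree [Fintype V] (hT : T.IsTree) {u w : V}
    (hu : ∀ x, T.Adj u x → x = w) (hcard : 2 ≤ Fintype.card V) :
    (T.comap (Subtype.val : {x : V // x ≠ u} → V)).IsTree := by
  constructor
  · have hne : Nonempty {x : V // x ≠ u} := by
      obtain ⟨x, hx⟩ := Fintype.exists_ne_of_one_lt_card (by omega) u
      exact ⟨⟨x, hx⟩⟩
    refine Connected.mk ?_
    intro x y
    obtain ⟨p, hp⟩ := (hT.existsUnique_path x.1 y.1).exists
    have := reachable_comap hu p hp x.2 y.2
    simpa using this
  · intro x c hc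
    exact hT.IsAcyclic ((c.map (Embedding.comap (Function.Embedding.subtype _) T).toHom))
      (hc.map (Function.Embedding.subtype _).injective)

lemma exists_leaf [Fintype V] (hT : T.IsTree) (hcard : 2 ≤ Fintype.card V) (v : V) :
    ∃ u, u ≠ v ∧ (T.neighborSet u).ncard = 1 := by
  classical
  have hdc : ∀ x : V, (T.neighborSet x).ncard = T.degree x := fun x => by
    rw [← card_neighborSet_eq_degree, ← Nat.card_eq_fintype_card, Nat.card_coe_set_eq]
  simp only [hdc]
  by_contra hcon
  push_neg at hcon
  have hdeg1 : ∀ x : V, 1 ≤ T.degree x := by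
    intro x
    obtain ⟨y, hy⟩ := Fintype.exists_ne_of_one_lt_card (by omega) x
    obtain ⟨p, -⟩ := (hT.existsUnique_path x y).exists
    cases p with
    | nil => exact absurd rfl hy.symm
    | cons h _ =>
      have : 0 < T.degree x := by
        rw [← card_neighborFinset_eq_degree]
        exact Finset.card_pos.mpr ⟨_, (mem_neighborFinset _ _ _).mpr h⟩
      omega
  have hdeg2 : ∀ x : V, x ≠ v → 2 ≤ T.degree x := by
    intro x hx
    have := hcon x hx
    have := hdeg1 x
    omega
  have hsum : ∑ x, T.degree x = 2 * T.edgeFinset.card := T.sum_degrees_eq_twice_card_edges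
  have hedge : T.edgeFinset.card + 1 = Fintype.card V := hT.card_edgeFinset
  have hsplit : ∑ x, T.degree x = T.degree v + ∑ x ∈ Finset.univ.erase v, T.degree x :=
    (Finset.add_sum_erase _ _ (Finset.mem_univ v)).symm
  have hge : (Finset.univ.erase v).card * 2 ≤ ∑ x ∈ Finset.univ.erase v, T.degree x := by
    have := Finset.card_nsmul_le_sum (Finset.univ.erase v) (fun x => T.degree x) 2
      (fun x hx => hdeg2 x (Finset.ne_of_mem_erase hx))
    simpa [smul_eq_mul] using this
  have hcc : (Finset.univ.erase v).card = Fintype.card V - 1 := by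
    rw [Finset.card_erase_of_mem (Finset.mem_univ v), Finset.card_univ]
  have h1 := hdeg1 v
  rw [hcc] at hge
  omega

end


open SimpleGraph

lemma step_equiv {V : Type} (T : SimpleGraph V) {k : ℕ} (c1 c2 : Fin k)
    {u w v : V} (hu : ∀ x, T.Adj u x ↔ x = w) (hvu : v ≠ u) (hwu : w ≠ u) :
    Nonempty ({f : V → Fin k // PColor T v c1 c2 f} ≃
      Σ g : {g : {x : V // x ≠ u} → Fin k //
          PColor (T.comap (Subtype.val : {x : V // x ≠ u} → V)) ⟨v, hvu⟩ c1 c2 g},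
        {c : Fin k // c ≠ g.1 ⟨w, hwu⟩ ∧ (T.Adj v u → c ≠ c2)}) := by
  classical
  have huw : T.Adj u w := (hu w).mpr rfl
  refine ⟨Equiv.ofBijective (fun f =>
    ⟨⟨fun x => f.1 x.1, ⟨fun a b hab => f.2.1 a.1 b.1 hab, f.2.2.1,
        fun x hx => f.2.2.2 x.1 hx⟩⟩,
      ⟨f.1 u, ⟨f.2.1 u w huw, fun h => f.2.2.2 u h⟩⟩⟩) ⟨?_, ?_⟩⟩
  · rintro ⟨f1, hf1⟩ ⟨f2, hf2⟩ h
    obtain ⟨h1, h2⟩ := Sigma.mk.inj_iff.mp h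
    have hg : (fun x : {x : V // x ≠ u} => f1 x.1) = fun x : {x : V // x ≠ u} => f2 x.1 :=
      congrArg Subtype.val h1
    have hiff : ∀ c : Fin k,
        (c ≠ (fun x : {x : V // x ≠ u} => f1 x.1) ⟨w, hwu⟩ ∧ (T.Adj v u → c ≠ c2)) ↔
        (c ≠ (fun x : {x : V // x ≠ u} => f2 x.1) ⟨w, hwu⟩ ∧ (T.Adj v u → c ≠ c2)) := by
      intro c; rw [hg]
    have hval : f1 u = f2 u := by
      have := (Subtype.heq_iff_coe_eq hiff).mp h2
      simpa using this
    refine Subtype.ext (funext fun x => ?_)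
    by_cases hx : x = u
    · subst hx; exact hval
    · exact congrFun hg ⟨x, hx⟩
  · rintro ⟨g, c⟩
    have hPf : PColor T v c1 c2 (fun x => if h : x = u then c.1 else g.1 ⟨x, h⟩) := by
      refine ⟨?_, ?_, ?_⟩
      · intro a b hab
        by_cases hau : a = u
        · have hab' : T.Adj u b := by rw [hau] at hab; exact hab
          have hbw : b = w := (hu b).mp hab'
          have hbu : b ≠ u := hab'.ne'
          simp only [dif_pos hau, dif_neg hbu]
          have hbb : (⟨b, hbu⟩ : {x : V // x ≠ u}) = ⟨w, hwu⟩ := Subtype.ext hbw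
          rw [hbb]
          exact c.2.1
        · by_cases hbu : b = u
          · have hab' : T.Adj u a := by rw [hbu] at hab; exact hab.symm
            have haw : a = w := (hu a).mp hab'
            simp only [dif_pos hbu, dif_neg hau]
            have haa : (⟨a, hau⟩ : {x : V // x ≠ u}) = ⟨w, hwu⟩ := Subtype.ext haw
            rw [haa]
            exact c.2.1.symm
          · simp only [dif_neg hau, dif_neg hbu]
            exact g.2.1 ⟨a, hau⟩ ⟨b, hbu⟩ hab
      · simp only [dif_neg hvu]
        exact g.2.2.1
      · intro x hx
        by_cases hxu : x = u
        · subst hxu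
          simp only [dif_pos rfl]
          exact c.2.2 hx
        · simp only [dif_neg hxu]
          exact g.2.2.2 ⟨x, hxu⟩ hx
    refine ⟨⟨fun x => if h : x = u then c.1 else g.1 ⟨x, h⟩, hPf⟩, ?_⟩
    have h1 : (⟨fun x : {x : V // x ≠ u} =>
        (fun y => if h : y = u then c.1 else g.1 ⟨y, h⟩) x.1, by
          exact ⟨fun a b hab => hPf.1 a.1 b.1 hab, hPf.2.1, fun x hx => hPf.2.2 x.1 hx⟩⟩ :
        {g : {x : V // x ≠ u} → Fin k //
          PColor (T.comap (Subtype.val : {x : V // x ≠ u} → V)) ⟨v, hvu⟩ c1 c2 g}) = g := by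
      refine Subtype.ext (funext fun x => ?_)
      simp only [dif_neg x.2]
    refine Sigma.mk.inj_iff.mpr ⟨h1, ?_⟩
    refine (Subtype.heq_iff_coe_eq (fun x => iff_of_eq (congrArg
      (fun t : {g : {x : V // x ≠ u} → Fin k //
          PColor (T.comap (Subtype.val : {x : V // x ≠ u} → V)) ⟨v, hvu⟩ c1 c2 g} =>
        (x ≠ t.1 ⟨w, hwu⟩ ∧ (T.Adj v u → x ≠ c2))) h1))).mpr ?_
    exact dif_pos rfl


lemma tree_count : ∀ (n : ℕ) (V : Type) [Fintype V] (T : SimpleGraph V), T.IsTree →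
    Fintype.card V = n → ∀ (v : V) (k : ℕ) (c1 c2 : Fin k), c1 ≠ c2 →
    Nat.card {f : V → Fin k // PColor T v c1 c2 f}
      = (k-1) ^ (n - 1 - (T.neighborSet v).ncard) * (k-2) ^ (T.neighborSet v).ncard := by
  intro n
  induction n using Nat.strong_induction_on with
  | _ n IH =>
  intro V _ T hT hn v k c1 c2 h12
  classical
  have hne : Nonempty V := hT.isConnected.nonempty
  have hpos : 1 ≤ n := hn ▸ Fintype.card_pos
  by_cases hone : n = 1
  · have hall : ∀ x : V, x = v :=
      fun x => Fintype.card_le_one_iff.mp (by omega) x v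
    have hns : T.neighborSet v = ∅ := by
      ext x
      simp only [mem_neighborSet, Set.mem_empty_iff_false, iff_false]
      intro hx
      exact T.irrefl (by rwa [hall x] at hx)
    rw [hns, Set.ncard_empty, hone]
    simp only [Nat.sub_zero, Nat.sub_self, pow_zero, mul_one]
    rw [Nat.card_eq_one_iff_unique]
    refine ⟨⟨fun f g => ?_⟩, ?_⟩
    · refine Subtype.ext (funext fun x => ?_)
      rw [hall x, f.2.2.1, g.2.2.1]
    · refine ⟨⟨fun _ => c1, ⟨?_, rfl, ?_⟩⟩⟩
      · intro a b hab
        exact False.elim (T.irrefl (by rwa [hall a, hall b] at hab))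
      · intro x hx
        exact False.elim (T.irrefl (by rwa [hall x] at hx))
  · obtain ⟨u, huv, hdeg⟩ := exists_leaf hT (by omega) v
    obtain ⟨w, hw⟩ := Set.ncard_eq_one.mp hdeg
    have hu : ∀ x, T.Adj u x ↔ x = w := by
      intro x
      have := Set.ext_iff.mp hw x
      simpa using this
    have hwu : w ≠ u := ((hu w).mpr rfl).ne'
    have hvu : v ≠ u := Ne.symm huv
    have hT' : (T.comap (Subtype.val : {x : V // x ≠ u} → V)).IsTree :=
      comap_isTree hT (fun x hx => (hu x).mp hx) (by omega)
    have hcV' : Fintype.card {x : V // x ≠ u} = n - 1 := by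
      rw [Fintype.card_subtype_compl, Fintype.card_subtype_eq, hn]
    have himg : Subtype.val '' ((T.comap (Subtype.val : {x : V // x ≠ u} → V)).neighborSet
        ⟨v, hvu⟩) = T.neighborSet v \ {u} := by
      ext x
      simp only [Set.mem_image, mem_neighborSet, comap_adj, Set.mem_diff,
        Set.mem_singleton_iff]
      constructor
      · rintro ⟨⟨y, hy⟩, hadj, rfl⟩
        exact ⟨hadj, hy⟩
      · rintro ⟨hadj, hx⟩
        exact ⟨⟨x, hx⟩, hadj, rfl⟩
    have hncard' : ((T.comap (Subtype.val : {x : V // x ≠ u} → V)).neighborSet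
        ⟨v, hvu⟩).ncard = (T.neighborSet v \ {u}).ncard := by
      rw [← himg, Set.ncard_image_of_injective _ Subtype.val_injective]
    obtain ⟨e⟩ := step_equiv T c1 c2 hu hvu hwu
    rw [Nat.card_congr e]
    have hdn : (T.neighborSet v).ncard + 1 ≤ n := hn ▸ ncard_nbhd_lt T v
    have hIH := IH (n-1) (by omega) {x : V // x ≠ u}
      (T.comap (Subtype.val : {x : V // x ≠ u} → V)) hT' hcV' ⟨v, hvu⟩ k c1 c2 h12
    by_cases hadj : T.Adj v u
    · have hwv : w = v := ((hu v).mp hadj.symm).symm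
      have hmem : u ∈ T.neighborSet v := hadj
      have hd1 : 1 ≤ (T.neighborSet v).ncard :=
        (Set.ncard_pos (Set.toFinite _)).mpr ⟨u, hmem⟩
      have hdd : ((T.comap (Subtype.val : {x : V // x ≠ u} → V)).neighborSet
          ⟨v, hvu⟩).ncard = (T.neighborSet v).ncard - 1 := by
        rw [hncard', Set.ncard_diff_singleton_of_mem hmem]
      rw [card_sigma_const (m := k - 2) ?_, hIH, hdd]
      · have h1 : n - 1 - 1 - ((T.neighborSet v).ncard - 1) = n - 1 - (T.neighborSet v).ncard :=
          by omega
        have h2 : (T.neighborSet v).ncard - 1 + 1 = (T.neighborSet v).ncard := by omega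
        rw [h1, mul_assoc, ← pow_succ, h2]
      · intro g
        have hgw : g.1 ⟨w, hwu⟩ = c1 := by
          have hvw : (⟨w, hwu⟩ : {x : V // x ≠ u}) = ⟨v, hvu⟩ := Subtype.ext hwv
          rw [hvw]
          exact g.2.2.1
        have hiff : ∀ c : Fin k, (c ≠ g.1 ⟨w, hwu⟩ ∧ (T.Adj v u → c ≠ c2)) ↔
            (c ≠ c1 ∧ c ≠ c2) := by
          intro c
          rw [hgw]
          simp [hadj]
        rw [Nat.card_congr (Equiv.subtypeEquivRight hiff)]
        exact card_ne_two c1 c2 h12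
    · have hnotmem : u ∉ T.neighborSet v := hadj
      have hdd : ((T.comap (Subtype.val : {x : V // x ≠ u} → V)).neighborSet
          ⟨v, hvu⟩).ncard = (T.neighborSet v).ncard := by
        rw [hncard', Set.diff_singleton_eq_self hnotmem]
      have hdn' : (T.neighborSet v).ncard + 1 ≤ n - 1 := by
        have h := ncard_nbhd_lt (T.comap (Subtype.val : {x : V // x ≠ u} → V)) ⟨v, hvu⟩
        rwa [hdd, hcV'] at h
      rw [card_sigma_const (m := k - 1) ?_, hIH, hdd]
      · have h1 : n - 1 - 1 - (T.neighborSet v).ncard + 1 = n - 1 - (T.neighborSet v).ncard :=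
          by omega
        rw [← h1, pow_succ]
        ring
      · intro g
        have hiff : ∀ c : Fin k, (c ≠ g.1 ⟨w, hwu⟩ ∧ (T.Adj v u → c ≠ c2)) ↔
            (c ≠ g.1 ⟨w, hwu⟩) := by
          intro c
          simp [hadj]
        rw [Nat.card_congr (Equiv.subtypeEquivRight hiff)]
        exact card_ne_one _

lemma shadow_equiv {V : Type} (T : SimpleGraph V) (v : V) (k : ℕ) :
    Nonempty ({F : ({u : V // u ≠ v} ⊕ Fin 2) → Fin k //
        ∀ x y, (cliqueShadow T v 2).Adj x y → F x ≠ F y} ≃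
      Σ p : {p : Fin k × Fin k // p.1 ≠ p.2}, {f : V → Fin k // PColor T v p.1.1 p.1.2 f}) := by
  classical
  have hS : ∀ x y, (cliqueShadow T v 2).Adj x y ↔ x ≠ y ∧
      ((match x, y with
        | Sum.inl a, Sum.inl b => T.Adj a.1 b.1
        | Sum.inl a, Sum.inr _ => T.Adj a.1 v
        | Sum.inr _, Sum.inl _ => False
        | Sum.inr _, Sum.inr _ => True) ∨
       (match y, x with
        | Sum.inl a, Sum.inl b => T.Adj a.1 b.1
        | Sum.inl a, Sum.inr _ => T.Adj a.1 v
        | Sum.inr _, Sum.inl _ => False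
        | Sum.inr _, Sum.inr _ => True)) := by
    intro x y
    unfold cliqueShadow
    rw [fromRel_adj]
    cases x <;> cases y <;> exact Iff.rfl
  refine ⟨Equiv.ofBijective (fun F =>
    ⟨⟨(F.1 (Sum.inr 0), F.1 (Sum.inr 1)),
      F.2 (Sum.inr 0) (Sum.inr 1) ((hS _ _).mpr ⟨by simp, Or.inl trivial⟩)⟩,
     ⟨fun x => if h : x = v then F.1 (Sum.inr 0) else F.1 (Sum.inl ⟨x, h⟩), ?_⟩⟩) ⟨?_, ?_⟩⟩
  · refine ⟨?_, dif_pos rfl, ?_⟩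
    · intro a b hab
      by_cases hav : a = v
      · have hbv : b ≠ v := by rw [hav] at hab; exact hab.ne'
        simp only [dif_pos hav, dif_neg hbv]
        refine (F.2 (Sum.inl ⟨b, hbv⟩) (Sum.inr 0) ((hS _ _).mpr ⟨by simp, Or.inl ?_⟩)).symm
        rw [hav] at hab
        exact hab.symm
      · by_cases hbv : b = v
        · simp only [dif_pos hbv, dif_neg hav]
          refine F.2 (Sum.inl ⟨a, hav⟩) (Sum.inr 0) ((hS _ _).mpr ⟨by simp, Or.inl ?_⟩)
          rw [hbv] at hab
          exact hab
        · simp only [dif_neg hav, dif_neg hbv]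
          refine F.2 (Sum.inl ⟨a, hav⟩) (Sum.inl ⟨b, hbv⟩) ((hS _ _).mpr ⟨?_, Or.inl hab⟩)
          simp [Subtype.ext_iff]
          exact hab.ne
    · intro x hx
      have hxv : x ≠ v := hx.ne'
      simp only [dif_neg hxv]
      exact F.2 (Sum.inl ⟨x, hxv⟩) (Sum.inr 1) ((hS _ _).mpr ⟨by simp, Or.inl hx.symm⟩)
  · rintro ⟨F1, hF1⟩ ⟨F2, hF2⟩ h
    obtain ⟨h1, h2⟩ := Sigma.mk.inj_iff.mp h
    have hp : (F1 (Sum.inr 0), F1 (Sum.inr 1)) = (F2 (Sum.inr 0), F2 (Sum.inr 1)) :=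
      congrArg Subtype.val h1
    have h0 : F1 (Sum.inr 0) = F2 (Sum.inr 0) := congrArg Prod.fst hp
    have h1' : F1 (Sum.inr 1) = F2 (Sum.inr 1) := congrArg Prod.snd hp
    have hiff : ∀ f : V → Fin k, PColor T v (F1 (Sum.inr 0)) (F1 (Sum.inr 1)) f ↔
        PColor T v (F2 (Sum.inr 0)) (F2 (Sum.inr 1)) f := by
      intro f; rw [h0, h1']
    have hfn : (fun x => if h : x = v then F1 (Sum.inr 0) else F1 (Sum.inl ⟨x, h⟩)) =
        (fun x => if h : x = v then F2 (Sum.inr 0) else F2 (Sum.inl ⟨x, h⟩)) :=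
      (Subtype.heq_iff_coe_eq hiff).mp h2
    refine Subtype.ext (funext fun x => ?_)
    cases x with
    | inl a =>
      have := congrFun hfn a.1
      simp only [dif_neg a.2] at this
      exact this
    | inr i =>
      fin_cases i
      · exact h0
      · exact h1'
  · rintro ⟨p, f⟩
    have hFprop : ∀ x y, (cliqueShadow T v 2).Adj x y →
        (fun z => match z with
          | Sum.inl a => f.1 a.1
          | Sum.inr i => if i = 0 then p.1.1 else p.1.2) x ≠
        (fun z => match z with
          | Sum.inl a => f.1 a.1
          | Sum.inr i => if i = 0 then p.1.1 else p.1.2) y := by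
      intro x y hxy
      obtain ⟨hne, hrel⟩ := (hS x y).mp hxy
      cases x with
      | inl a =>
        cases y with
        | inl b =>
          rcases hrel with h | h
          · exact f.2.1 a.1 b.1 h
          · exact (f.2.1 b.1 a.1 h).symm
        | inr i =>
          have hA : T.Adj a.1 v := by
            rcases hrel with h | h
            · exact h
            · exact h.elim
          have hne1 : f.1 a.1 ≠ p.1.1 :=
            fun hh => f.2.1 a.1 v hA (hh.trans f.2.2.1.symm)
          have hne2 : f.1 a.1 ≠ p.1.2 := f.2.2.2 a.1 hA.symm
          by_cases hi : i = 0 <;> simp [hi, hne1, hne2]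
      | inr i =>
        cases y with
        | inl b =>
          have hA : T.Adj b.1 v := by
            rcases hrel with h | h
            · exact h.elim
            · exact h
          have hne1 : f.1 b.1 ≠ p.1.1 :=
            fun hh => f.2.1 b.1 v hA (hh.trans f.2.2.1.symm)
          have hne2 : f.1 b.1 ≠ p.1.2 := f.2.2.2 b.1 hA.symm
          by_cases hi : i = 0 <;> simp [hi, hne1.symm, hne2.symm]
        | inr j =>
          have hij : i ≠ j := fun hh => hne (by rw [hh])
          by_cases hi : i = 0 <;> by_cases hj : j = 0
          · exact absurd (hi.trans hj.symm) hij
          · simp only [if_pos hi, if_neg hj]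
            exact p.2
          · simp only [if_neg hi, if_pos hj]
            exact p.2.symm
          · exact absurd (by omega : i.val = j.val) (fun hh => hij (Fin.ext hh))
    refine ⟨⟨fun z => match z with
      | Sum.inl a => f.1 a.1
      | Sum.inr i => if i = 0 then p.1.1 else p.1.2, hFprop⟩, ?_⟩
    have h1 : (⟨(if (0 : Fin 2) = 0 then p.1.1 else p.1.2,
        if (1 : Fin 2) = 0 then p.1.1 else p.1.2), by simp [p.2]⟩ :
        {q : Fin k × Fin k // q.1 ≠ q.2}) = p := by
      refine Subtype.ext (Prod.ext ?_ ?_) <;> simp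
    refine Sigma.mk.inj_iff.mpr ⟨h1, ?_⟩
    refine (Subtype.heq_iff_coe_eq (fun g => iff_of_eq (congrArg
      (fun q : {q : Fin k × Fin k // q.1 ≠ q.2} => PColor T v q.1.1 q.1.2 g) h1))).mpr ?_
    funext x
    by_cases hx : x = v
    · simp only [dif_pos hx]
      have hfv := f.2.2.1
      subst hx
      simpa using hfv.symm
    · simp only [dif_neg hx]


/-- For a tree `T` on `n ≥ 1` vertices and a vertex `v`, the shadow graph `T_v`
(obtained by deleting `v`, adding two adjacent new vertices `v₁, v₂`, each joined to all
neighbors of `v`) has exactly `k·(k-1)^(n-deg v)·(k-2)^(deg v)` proper `k`-colorings. -/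
theorem tree_pair_shadow_chromatic {V : Type} [Fintype V] (T : SimpleGraph V) (hT : T.IsTree)
    (n : ℕ) (hn : Fintype.card V = n) (hn1 : 1 ≤ n) (v : V) (k : ℕ) :
    numColorings (cliqueShadow T v 2) k =
      k * (k - 1) ^ (n - (T.neighborSet v).ncard) * (k - 2) ^ (T.neighborSet v).ncard := by
  classical
  unfold numColorings
  obtain ⟨e⟩ := shadow_equiv T v k
  rw [Nat.card_congr e]
  have hdn : (T.neighborSet v).ncard + 1 ≤ n := hn ▸ ncard_nbhd_lt T v
  have hcs := card_sigma_const (I := {p : Fin k × Fin k // p.1 ≠ p.2})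
    (F := fun p => {f : V → Fin k // PColor T v p.1.1 p.1.2 f})
    (m := (k-1) ^ (n - 1 - (T.neighborSet v).ncard) * (k-2) ^ (T.neighborSet v).ncard)
    (fun p => tree_count n V T hT hn v k p.1.1 p.1.2 p.2)
  rw [hcs]
  have hcp : Nat.card {p : Fin k × Fin k // p.1 ≠ p.2} = k * k - k := by
    have e2 : {p : Fin k × Fin k // p.1 = p.2} ≃ Fin k :=
      ⟨fun p => p.1.1, fun a => ⟨(a, a), rfl⟩,
       fun p => by obtain ⟨⟨a, b⟩, h⟩ := p; cases h; rfl, fun a => rfl⟩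
    rw [Nat.card_eq_fintype_card, Fintype.card_subtype_compl, Fintype.card_prod,
      Fintype.card_fin, Fintype.card_congr e2, Fintype.card_fin]
  rw [hcp]
  have hkk : k * k - k = k * (k - 1) := by
    cases k with
    | zero => simp
    | succ m =>
      simp only [Nat.succ_sub_one]
      ring_nf
      omega
  have hnd : n - (T.neighborSet v).ncard = (n - 1 - (T.neighborSet v).ncard) + 1 := by omega
  rw [hkk, hnd, pow_succ]
  ring
end

section
/- For any finite simple graph G and vertex v, form the graph G_v by deleting v, adding two adjacent new vertices v₁, v₂, each joined to every neighbor of v in G. Then the number of proper k-colorings of G_v equals the number of ordered pairs (φ₁, φ₂) of proper k-colorings of G that differ exactly at the vertex v, i.e., φ₁(v) ≠ φ₂(v) and φ₁(u) = φ₂(u) for all u ≠ v. -/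
/-- For any finite simple graph `G` and vertex `v`, the number of proper `k`-colorings of
the pair shadow graph `G_v` equals the number of ordered pairs `(φ₁, φ₂)` of proper
`k`-colorings of `G` that differ exactly at `v`. -/
theorem pair_shadow_counts_ordered_pairs {V : Type} [Fintype V] (G : SimpleGraph V)
    (v : V) (k : ℕ) :
    numColorings (cliqueShadow G v 2) k =
      Nat.card {p : (V → Fin k) × (V → Fin k) //
        (∀ u w, G.Adj u w → p.1 u ≠ p.1 w) ∧
        (∀ u w, G.Adj u w → p.2 u ≠ p.2 w) ∧
        p.1 v ≠ p.2 v ∧ (∀ u, u ≠ v → p.1 u = p.2 u)} := by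
  classical
  apply Nat.card_congr
  refine
    { toFun := fun f =>
        ⟨((fun u => if h : u = v then f.1 (Sum.inr 0) else f.1 (Sum.inl ⟨u, h⟩)),
          (fun u => if h : u = v then f.1 (Sum.inr 1) else f.1 (Sum.inl ⟨u, h⟩))), ?_⟩
      invFun := fun p =>
        ⟨fun x => match x with
          | Sum.inl a => p.1.1 a.1
          | Sum.inr i => if i = 0 then p.1.1 v else p.1.2 v, ?_⟩
      left_inv := ?_
      right_inv := ?_ }
  · obtain ⟨f, hf⟩ := f
    have hadj : ∀ a : {u : V // u ≠ v}, G.Adj a.1 v → ∀ i : Fin 2,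
        f (Sum.inl a) ≠ f (Sum.inr i) := by
      intro a ha i
      apply hf
      simp [cliqueShadow, SimpleGraph.fromRel_adj, ha]
    have hadj' : ∀ a b : {u : V // u ≠ v}, G.Adj a.1 b.1 →
        f (Sum.inl a) ≠ f (Sum.inl b) := by
      intro a b hab
      apply hf
      simp only [cliqueShadow, SimpleGraph.fromRel_adj]
      refine ⟨fun h => ?_, Or.inl hab⟩
      injection h with h'
      rw [h'] at hab
      exact G.irrefl hab
    have h01 : f (Sum.inr 0) ≠ f (Sum.inr 1) := by
      apply hf
      simp [cliqueShadow, SimpleGraph.fromRel_adj]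
    refine ⟨?_, ?_, ?_, ?_⟩
    · intro u w huw
      by_cases hu : u = v
      · by_cases hw : w = v
        · rw [hu, hw] at huw; exact (G.irrefl huw).elim
        · simp only [dif_pos hu, dif_neg hw]
          rw [hu] at huw
          exact (hadj ⟨w, hw⟩ (G.adj_symm huw) 0).symm
      · by_cases hw : w = v
        · simp only [dif_neg hu, dif_pos hw]
          rw [hw] at huw
          exact hadj ⟨u, hu⟩ huw 0
        · simp only [dif_neg hu, dif_neg hw]
          exact hadj' ⟨u, hu⟩ ⟨w, hw⟩ huw
    · intro u w huw
      by_cases hu : u = v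
      · by_cases hw : w = v
        · rw [hu, hw] at huw; exact (G.irrefl huw).elim
        · simp only [dif_pos hu, dif_neg hw]
          rw [hu] at huw
          exact (hadj ⟨w, hw⟩ (G.adj_symm huw) 1).symm
      · by_cases hw : w = v
        · simp only [dif_neg hu, dif_pos hw]
          rw [hw] at huw
          exact hadj ⟨u, hu⟩ huw 1
        · simp only [dif_neg hu, dif_neg hw]
          exact hadj' ⟨u, hu⟩ ⟨w, hw⟩ huw
    · simp only [dif_pos rfl]
      exact h01
    · intro u hu
      simp only [dif_neg hu]
  · obtain ⟨⟨p₁, p₂⟩, h₁, h₂, hne, heq⟩ := p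
    have heq' : ∀ u : V, u ≠ v → p₁ u = p₂ u := heq
    intro x y hxy
    match x, y with
    | Sum.inl a, Sum.inl b =>
      simp only [cliqueShadow, SimpleGraph.fromRel_adj] at hxy
      rcases hxy.2 with h | h
      · exact h₁ _ _ h
      · exact fun he => h₁ _ _ h he.symm
    | Sum.inl a, Sum.inr i =>
      simp only [cliqueShadow, SimpleGraph.fromRel_adj] at hxy
      have ha : G.Adj a.1 v := by tauto
      by_cases hi : i = 0
      · simp only [if_pos hi]
        exact h₁ _ _ ha
      · simp only [if_neg hi]
        rw [heq' a.1 a.2]; exact h₂ _ _ ha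
    | Sum.inr i, Sum.inl a =>
      simp only [cliqueShadow, SimpleGraph.fromRel_adj] at hxy
      have ha : G.Adj a.1 v := by tauto
      by_cases hi : i = 0
      · simp only [if_pos hi]
        exact fun he => h₁ _ _ ha he.symm
      · simp only [if_neg hi]
        rw [heq' a.1 a.2]; exact fun he => h₂ _ _ ha he.symm
    | Sum.inr i, Sum.inr j =>
      simp only [cliqueShadow, SimpleGraph.fromRel_adj] at hxy
      have hij : i ≠ j := by
        intro h; exact hxy.1 (by rw [h])
      by_cases hi : i = 0 <;> by_cases hj : j = 0
      · exact absurd (hi.trans hj.symm) hij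
      · simp only [if_pos hi, if_neg hj]; exact hne
      · simp only [if_neg hi, if_pos hj]; exact hne.symm
      · exact absurd (by omega : i = j) hij
  · intro f
    apply Subtype.ext
    funext x
    match x with
    | Sum.inl a => simp [a.2]
    | Sum.inr i =>
      by_cases hi : i = 0
      · simp [hi]
      · have h1 : i = 1 := by omega
        simp [h1]
  · intro p
    apply Subtype.ext
    apply Prod.ext
    · funext u
      by_cases hu : u = v
      · subst hu; simp
      · simp [hu]
    · funext u
      by_cases hu : u = v
      · subst hu; simp
      · have := (p.2.2.2.2 : ∀ u, u ≠ v → p.1.1 u = p.1.2 u) u hu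
        simp [hu, this]
end

section
/- The number of edges of the k-coloring graph C_k(G) of a finite simple graph G equals (1/2)·Σ_{v∈V(G)} π_{G_v}(k), where G_v is obtained from G by replacing v with two adjacent copies v₁, v₂ each joined to all neighbors of v, and π_{G_v}(k) is the number of proper k-colorings of G_v. -/
/-- The `k`-coloring graph of `G`: vertices are proper `k`-colorings of `G`, and two
colorings are adjacent iff they differ at exactly one vertex. -/
def coloringGraph {V : Type} (G : SimpleGraph V) (k : ℕ) :
    SimpleGraph {f : V → Fin k // ∀ u w, G.Adj u w → f u ≠ f w} :=
  SimpleGraph.fromRel (fun f g => ∃ v, ∀ u, u ≠ v → f.1 u = g.1 u)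

/-!
A dart `(f, g)` of `C_k(G)` determines a unique vertex `v` at which `f` and `g` differ. Giving
the two adjacent copies of `v` in `G_v` the colours `f v` and `g v` turns the dart into a proper
colouring of `G_v`, and every proper colouring of `G_v` arises from exactly one such dart. Hence
the darts, of which there are twice as many as edges, are counted by `∑ v, π_{G_v}(k)`.
-/

lemma SimpleGraph.two_mul_ncard_edgeSet {W : Type*} [Finite W] (H : SimpleGraph W) :
    2 * H.edgeSet.ncard = Nat.card H.Dart := by
  classical
  have := Fintype.ofFinite W
  rw [Nat.card_eq_fintype_card, dart_card_eq_twice_card_edges, ← coe_edgeFinset,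
    Set.ncard_coe_finset]

section

variable {V : Type}

abbrev ProperColoring (G : SimpleGraph V) (k : ℕ) : Type :=
  {f : V → Fin k // ∀ u w, G.Adj u w → f u ≠ f w}

def DiffersOnlyAt {α : Type*} (f g : V → α) (v : V) : Prop :=
  f v ≠ g v ∧ ∀ u, u ≠ v → f u = g u

lemma DiffersOnlyAt.unique {α : Type*} {f g : V → α} {v w : V} (hv : DiffersOnlyAt f g v)
    (hw : DiffersOnlyAt f g w) : v = w := by
  by_contra h
  exact hv.1 (hw.2 v h)

lemma differsOnlyAt_of_ne {α : Type*} {f g : V → α} {v : V} (hne : f ≠ g)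
    (hoff : ∀ u, u ≠ v → f u = g u) : DiffersOnlyAt f g v :=
  ⟨fun hv => hne <| funext fun u => by by_cases hu : u = v <;> simp_all, hoff⟩

lemma coloringGraph_adj_iff {G : SimpleGraph V} {k : ℕ} {f g : ProperColoring G k} :
    (coloringGraph G k).Adj f g ↔ ∃ v, DiffersOnlyAt f.1 g.1 v := by
  constructor
  · rintro ⟨hfg, ⟨v, hoff⟩ | ⟨v, hoff⟩⟩
    · exact ⟨v, differsOnlyAt_of_ne (Subtype.coe_injective.ne hfg) hoff⟩
    · exact ⟨v, differsOnlyAt_of_ne (Subtype.coe_injective.ne hfg) fun u hu =>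
        (hoff u hu).symm⟩
  · rintro ⟨v, hv, hoff⟩
    exact ⟨fun h => hv (congrArg (·.1 v) h), Or.inl ⟨v, hoff⟩⟩

noncomputable def coloringGraphDartEquiv (G : SimpleGraph V) (k : ℕ) :
    (Σ v : V, {p : ProperColoring G k × ProperColoring G k // DiffersOnlyAt p.1.1 p.2.1 v}) ≃
      (coloringGraph G k).Dart :=
  Equiv.ofBijective (fun x => ⟨x.2.1, coloringGraph_adj_iff.2 ⟨x.1, x.2.2⟩⟩) <| by
    constructor
    · rintro ⟨v, p, hp⟩ ⟨w, q, hq⟩ h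
      obtain rfl : p = q := congrArg SimpleGraph.Dart.toProd h
      obtain rfl := hp.unique hq
      rfl
    · rintro ⟨p, hp⟩
      obtain ⟨v, hv⟩ := coloringGraph_adj_iff.1 hp
      exact ⟨⟨v, p, hv⟩, rfl⟩

namespace cliqueShadow

variable {α : Type*}

def splitPair (f g : V → α) (v : V) : {u : V // u ≠ v} ⊕ Fin 2 → α :=
  Sum.elim (fun u => f u) ![f v, g v]

lemma splitPair_proper {G : SimpleGraph V} {f g : V → α} {v : V}
    (hf : ∀ u w, G.Adj u w → f u ≠ f w) (hg : ∀ u w, G.Adj u w → g u ≠ g w)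
    (hfg : DiffersOnlyAt f g v) :
    ∀ x y, (cliqueShadow G v 2).Adj x y → splitPair f g v x ≠ splitPair f g v y := by
  have key : ∀ (a : {u // u ≠ v}) i, G.Adj a v → f a ≠ ![f v, g v] i := by
    intro a i ha
    fin_cases i
    · exact hf _ _ ha
    · simpa [hfg.2 a a.2] using hg _ _ ha
  rintro (a | i) (b | j) hxy <;> simp [cliqueShadow, splitPair] at hxy ⊢
  · rcases hxy.2 with h | h
    exacts [hf _ _ h, (hf _ _ h).symm]
  · exact key a j hxy
  · exact (key b i hxy).symm
  · fin_cases i <;> fin_cases j <;> simp_all [hfg.1, hfg.1.symm]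

variable [DecidableEq V] {r : ℕ}

def collapse (v : V) (c : {u : V // u ≠ v} ⊕ Fin r → α) (i : Fin r) : V → α :=
  fun u => if h : u = v then c (.inr i) else c (.inl ⟨u, h⟩)

lemma collapse_proper {G : SimpleGraph V} {v : V} {c : {u : V // u ≠ v} ⊕ Fin r → α}
    (hc : ∀ x y, (cliqueShadow G v r).Adj x y → c x ≠ c y) (i : Fin r) :
    ∀ u w, G.Adj u w → collapse v c i u ≠ collapse v c i w := by
  intro u w huw
  unfold collapse
  split_ifs with hu hw hw
  · exact absurd (hu.trans hw.symm) huw.ne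
  · exact (hc _ _ (by simp [cliqueShadow, hu ▸ huw.symm])).symm
  · exact hc _ _ (by simp [cliqueShadow, hw ▸ huw])
  · exact hc _ _ (by simp [cliqueShadow, huw, huw.ne])

lemma collapse_splitPair_zero (f g : V → α) (v : V) : collapse v (splitPair f g v) 0 = f := by
  funext u
  by_cases hu : u = v
  · subst hu; simp [collapse, splitPair]
  · simp [collapse, splitPair, hu]

lemma collapse_splitPair_one {f g : V → α} {v : V} (hoff : ∀ u, u ≠ v → f u = g u) :
    collapse v (splitPair f g v) 1 = g := by
  funext u
  by_cases hu : u = v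
  · subst hu; simp [collapse, splitPair]
  · simp [collapse, splitPair, hu, hoff u hu]

lemma splitPair_collapse {v : V} (c : {u : V // u ≠ v} ⊕ Fin 2 → α) :
    splitPair (collapse v c 0) (collapse v c 1) v = c := by
  funext x
  rcases x with a | i
  · simp [splitPair, collapse, a.2]
  · fin_cases i <;> simp [splitPair, collapse]

lemma differsOnlyAt_collapse {v : V} {c : {u : V // u ≠ v} ⊕ Fin 2 → α}
    (hc : c (.inr 0) ≠ c (.inr 1)) : DiffersOnlyAt (collapse v c 0) (collapse v c 1) v :=
  ⟨by simpa [collapse], fun u hu => by simp [collapse, hu]⟩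

def coloringEquiv (G : SimpleGraph V) (k : ℕ) (v : V) :
    ProperColoring (cliqueShadow G v 2) k ≃
      {p : ProperColoring G k × ProperColoring G k // DiffersOnlyAt p.1.1 p.2.1 v} where
  toFun c :=
    ⟨(⟨collapse v c.1 0, collapse_proper c.2 0⟩,
        ⟨collapse v c.1 1, collapse_proper c.2 1⟩),
      differsOnlyAt_collapse (c.2 _ _ (by simp [cliqueShadow]))⟩
  invFun p := ⟨splitPair p.1.1.1 p.1.2.1 v, splitPair_proper p.1.1.2 p.1.2.2 p.2⟩
  left_inv c := Subtype.ext (splitPair_collapse c.1)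
  right_inv := fun ⟨(f, g), h⟩ => Subtype.ext <|
    Prod.ext (Subtype.ext (collapse_splitPair_zero _ g.1 _))
      (Subtype.ext (collapse_splitPair_one h.2))

end cliqueShadow

end

/-- The number of edges of `C_k(G)` equals `(1/2)·Σ_{v} π_{G_v}(k)` where `G_v` is the
pair shadow graph of `G` at `v` (stated multiplied through by 2). -/
theorem coloringGraph_edge_count {V : Type} [Fintype V] (G : SimpleGraph V) (k : ℕ) :
    2 * ((coloringGraph G k).edgeSet.ncard) =
      ∑ v : V, numColorings (cliqueShadow G v 2) k := by
  classical
  calc 2 * (coloringGraph G k).edgeSet.ncard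
      = Nat.card (coloringGraph G k).Dart := (coloringGraph G k).two_mul_ncard_edgeSet
    _ = ∑ v, Nat.card
          {p : ProperColoring G k × ProperColoring G k // DiffersOnlyAt p.1.1 p.2.1 v} := by
      rw [← Nat.card_sigma, Nat.card_congr (coloringGraphDartEquiv G k)]
    _ = ∑ v, numColorings (cliqueShadow G v 2) k :=
      Finset.sum_congr rfl fun v _ => (Nat.card_congr (cliqueShadow.coloringEquiv G k v)).symm
end

section
/- For a finite simple graph G, a vertex v, and an integer r ≥ 1, let G_v^{(K_r)} be obtained from G by deleting v, adding an r-clique on new vertices v₁,…,v_r, and joining each vᵢ to every neighbor of v in G. Then the number of proper k-colorings of G_v^{(K_r)} equals r! times the number of unordered r-element sets {φ₁,…,φ_r} of proper k-colorings of G that pairwise agree on all vertices except v and take r distinct values at v. -/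
set_option linter.unusedSectionVars false


namespace CliqueShadowAux
variable {V : Type} {r k : ℕ} [DecidableEq V] [DecidableEq (V → Fin k)] {G : SimpleGraph V} {v : V}

lemma adj_ll {a b : {u : V // u ≠ v}} :
    (cliqueShadow G v r).Adj (Sum.inl a) (Sum.inl b) ↔ G.Adj a.1 b.1 := by
  simp only [cliqueShadow, SimpleGraph.fromRel_adj]
  constructor
  · rintro ⟨-, h | h⟩
    · exact h
    · exact h.symm
  · intro h
    exact ⟨fun he => h.ne (by injection he with h'; rw [h']), Or.inl h⟩

lemma adj_lr {a : {u : V // u ≠ v}} {i : Fin r} :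
    (cliqueShadow G v r).Adj (Sum.inl a) (Sum.inr i) ↔ G.Adj a.1 v := by
  simp only [cliqueShadow, SimpleGraph.fromRel_adj]
  constructor
  · rintro ⟨-, h | h⟩
    · exact h
    · exact h.elim
  · intro h
    exact ⟨Sum.inl_ne_inr, Or.inl h⟩

lemma adj_rr {i j : Fin r} :
    (cliqueShadow G v r).Adj (Sum.inr i) (Sum.inr j) ↔ i ≠ j := by
  simp only [cliqueShadow, SimpleGraph.fromRel_adj]
  constructor
  · rintro ⟨h, -⟩
    exact fun he => h (by rw [he])
  · intro h
    exact ⟨fun he => h (by injection he), Or.inl trivial⟩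

/-- Type of proper colorings of the shadow graph. -/
def ShadowCol (G : SimpleGraph V) (v : V) (r k : ℕ) : Type :=
  {f : ({u : V // u ≠ v} ⊕ Fin r) → Fin k //
    ∀ a b, (cliqueShadow G v r).Adj a b → f a ≠ f b}

/-- Type of good sets of colorings. -/
def GoodSet (G : SimpleGraph V) (v : V) (r k : ℕ) : Type :=
  {S : Finset (V → Fin k) //
    S.card = r ∧
    (∀ f ∈ S, ∀ u w, G.Adj u w → f u ≠ f w) ∧
    (∀ f ∈ S, ∀ g ∈ S, ∀ u, u ≠ v → f u = g u) ∧
    (∀ f ∈ S, ∀ g ∈ S, f ≠ g → f v ≠ g v)}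

/-- The `i`-th coloring of `G` extracted from a shadow coloring. -/
def phiOf (F : ({u : V // u ≠ v} ⊕ Fin r) → Fin k) (i : Fin r) : V → Fin k :=
  fun u => if h : u = v then F (Sum.inr i) else F (Sum.inl ⟨u, h⟩)

variable (F : ShadowCol G v r k)

lemma phiOf_proper (i : Fin r) : ∀ u w, G.Adj u w → phiOf F.1 i u ≠ phiOf F.1 i w := by
  intro u w huw
  unfold phiOf
  by_cases hu : u = v <;> by_cases hw : w = v
  · exact absurd (hu ▸ hw ▸ huw) (G.irrefl)
  · rw [dif_pos hu, dif_neg hw]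
    exact fun he => F.2 _ _ (adj_lr.2 (hu ▸ huw.symm)) he.symm
  · rw [dif_neg hu, dif_pos hw]
    exact F.2 _ _ (adj_lr.2 (hw ▸ huw))
  · rw [dif_neg hu, dif_neg hw]
    exact F.2 _ _ (adj_ll.2 huw)

lemma phiOf_apply_v (i : Fin r) : phiOf F.1 i v = F.1 (Sum.inr i) := by
  simp [phiOf]

lemma phiOf_apply_ne (i : Fin r) {u : V} (h : u ≠ v) :
    phiOf F.1 i u = F.1 (Sum.inl ⟨u, h⟩) := by
  simp [phiOf, h]

lemma phiOf_inj : Function.Injective (phiOf F.1) := by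
  intro i j hij
  by_contra hne
  exact F.2 _ _ (adj_rr.2 hne) (by
    rw [← phiOf_apply_v F i, ← phiOf_apply_v F j, hij])

lemma phiOf_ne {i j : Fin r} (h : phiOf F.1 i ≠ phiOf F.1 j) :
    phiOf F.1 i v ≠ phiOf F.1 j v := by
  rw [phiOf_apply_v, phiOf_apply_v]
  exact F.2 _ _ (adj_rr.2 fun he => h (by rw [he]))

open Finset in
/-- The good set associated to a shadow coloring. -/
def setOf' (F : ShadowCol G v r k) : GoodSet G v r k := by
  refine ⟨Finset.image (phiOf F.1) Finset.univ, ?_, ?_, ?_, ?_⟩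
  · rw [Finset.card_image_of_injective _ (phiOf_inj F), Finset.card_univ, Fintype.card_fin]
  · intro f hf
    obtain ⟨i, -, rfl⟩ := Finset.mem_image.1 hf
    exact phiOf_proper F i
  · intro f hf g hg u hu
    obtain ⟨i, -, rfl⟩ := Finset.mem_image.1 hf
    obtain ⟨j, -, rfl⟩ := Finset.mem_image.1 hg
    rw [phiOf_apply_ne F i hu, phiOf_apply_ne F j hu]
  · intro f hf g hg hfg
    obtain ⟨i, -, rfl⟩ := Finset.mem_image.1 hf
    obtain ⟨j, -, rfl⟩ := Finset.mem_image.1 hg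
    exact phiOf_ne F hfg


variable [LinearOrder (V → Fin k)]

def elemOf (S : GoodSet G v r k) (i : Fin r) : V → Fin k :=
  (S.1.orderIsoOfFin S.2.1 i).1

lemma elemOf_mem (S : GoodSet G v r k) (i : Fin r) : elemOf S i ∈ S.1 :=
  (S.1.orderIsoOfFin S.2.1 i).2

lemma elemOf_inj (S : GoodSet G v r k) : Function.Injective (elemOf S) :=
  fun _ _ h => (S.1.orderIsoOfFin S.2.1).toEquiv.injective (Subtype.ext h)

lemma elemOf_eq_iff {S T : GoodSet G v r k} (h : S.1 = T.1) {i j : Fin r}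
    (he : elemOf S i = elemOf T j) : i = j := by
  obtain ⟨s, p⟩ := S
  obtain ⟨t, q⟩ := T
  dsimp at h
  subst h
  exact elemOf_inj ⟨s, p⟩ he

noncomputable def e1 (F : ShadowCol G v r k) : Fin r ≃ {x // x ∈ (setOf' F).1} :=
  Equiv.ofBijective (fun i => ⟨phiOf F.1 i, Finset.mem_image_of_mem _ (Finset.mem_univ i)⟩)
    (by
      rw [Fintype.bijective_iff_injective_and_card]
      refine ⟨fun i j hij => phiOf_inj F (congrArg Subtype.val hij), ?_⟩
      rw [Fintype.card_fin, Fintype.card_coe, (setOf' F).2.1])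

/-- The permutation associated to a shadow coloring. -/
noncomputable def permOf (F : ShadowCol G v r k) : Equiv.Perm (Fin r) :=
  (e1 F).trans ((setOf' F).1.orderIsoOfFin (setOf' F).2.1).toEquiv.symm

lemma elemOf_permOf (F : ShadowCol G v r k) (j : Fin r) :
    elemOf (setOf' F) (permOf F j) = phiOf F.1 j := by
  exact congrArg Subtype.val
    (((setOf' F).1.orderIsoOfFin (setOf' F).2.1).toEquiv.apply_symm_apply (e1 F j))

/-- Backward map: from a good set and a permutation, build a shadow coloring. -/
def colOf (hr : 0 < r) (P : GoodSet G v r k × Equiv.Perm (Fin r)) : ShadowCol G v r k := by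
  refine ⟨Sum.elim (fun a => elemOf P.1 (P.2 ⟨0, hr⟩) a.1) (fun i => elemOf P.1 (P.2 i) v), ?_⟩
  have hproper := P.1.2.2.1
  have hagree := P.1.2.2.2.1
  have hdist := P.1.2.2.2.2
  rintro (a | i) (b | j) hadj <;> simp only [Sum.elim_inl, Sum.elim_inr]
  · exact hproper _ (elemOf_mem _ _) _ _ (adj_ll.1 hadj)
  · have hav : G.Adj a.1 v := adj_lr.1 hadj
    have h1 : elemOf P.1 (P.2 ⟨0, hr⟩) a.1 = elemOf P.1 (P.2 j) a.1 :=
      hagree _ (elemOf_mem _ _) _ (elemOf_mem _ _) _ a.2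
    rw [h1]
    exact hproper _ (elemOf_mem _ _) _ _ hav
  · have hav : G.Adj b.1 v := adj_lr.1 hadj.symm
    have h1 : elemOf P.1 (P.2 ⟨0, hr⟩) b.1 = elemOf P.1 (P.2 i) b.1 :=
      hagree _ (elemOf_mem _ _) _ (elemOf_mem _ _) _ b.2
    exact fun he => hproper _ (elemOf_mem _ _) _ _ hav (h1 ▸ he.symm)
  · have hij : i ≠ j := adj_rr.1 hadj
    refine hdist _ (elemOf_mem _ _) _ (elemOf_mem _ _) ?_
    intro he
    exact hij (P.2.injective (elemOf_inj _ he))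

lemma phiOf_colOf (hr : 0 < r) (P : GoodSet G v r k × Equiv.Perm (Fin r)) (j : Fin r) :
    phiOf (colOf hr P).1 j = elemOf P.1 (P.2 j) := by
  funext u
  by_cases h : u = v
  · subst h
    rw [phiOf_apply_v]
    rfl
  · rw [phiOf_apply_ne _ _ h]
    show elemOf P.1 (P.2 ⟨0, hr⟩) u = elemOf P.1 (P.2 j) u
    exact P.1.2.2.2.1 _ (elemOf_mem _ _) _ (elemOf_mem _ _) _ h

lemma setOf'_colOf (hr : 0 < r) (P : GoodSet G v r k × Equiv.Perm (Fin r)) :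
    (setOf' (colOf hr P)).1 = P.1.1 := by
  refine Finset.eq_of_subset_of_card_le ?_ ?_
  · intro f hf
    obtain ⟨i, -, rfl⟩ := Finset.mem_image.1 hf
    rw [phiOf_colOf]
    exact elemOf_mem _ _
  · rw [(setOf' (colOf hr P)).2.1, P.1.2.1]

noncomputable def mainEquiv (hr : 0 < r) :
    ShadowCol G v r k ≃ GoodSet G v r k × Equiv.Perm (Fin r) where
  toFun F := ⟨setOf' F, permOf F⟩
  invFun := colOf hr
  left_inv F := by
    apply Subtype.ext
    funext x
    cases x with
    | inl a =>
      show elemOf (setOf' F) (permOf F ⟨0, hr⟩) a.1 = F.1 (Sum.inl a)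
      rw [elemOf_permOf]
      exact phiOf_apply_ne F _ a.2
    | inr i =>
      show elemOf (setOf' F) (permOf F i) v = F.1 (Sum.inr i)
      rw [elemOf_permOf]
      exact phiOf_apply_v F i
  right_inv P := by
    have hS : (setOf' (colOf hr P)).1 = P.1.1 := setOf'_colOf hr P
    refine Prod.ext (Subtype.ext hS) ?_
    apply Equiv.ext
    intro i
    refine elemOf_eq_iff hS ?_
    rw [elemOf_permOf, phiOf_colOf]

end CliqueShadowAux

/-- The number of proper `k`-colorings of `G_v^{(K_r)}` equals `r!` times the number of
unordered `r`-element sets of proper `k`-colorings of `G` that pairwise agree on all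
vertices except `v` and take `r` distinct values at `v`. -/
theorem clique_shadow_counts_sets {V : Type} [Fintype V] (G : SimpleGraph V)
    (v : V) (r : ℕ) (hr : 1 ≤ r) (k : ℕ) :
    numColorings (cliqueShadow G v r) k =
      Nat.factorial r * Nat.card {S : Finset (V → Fin k) //
        S.card = r ∧
        (∀ f ∈ S, ∀ u w, G.Adj u w → f u ≠ f w) ∧
        (∀ f ∈ S, ∀ g ∈ S, ∀ u, u ≠ v → f u = g u) ∧
        (∀ f ∈ S, ∀ g ∈ S, f ≠ g → f v ≠ g v)} := by

  classical
  letI : LinearOrder (V → Fin k) :=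
    LinearOrder.lift' (Fintype.equivFin (V → Fin k)) (Fintype.equivFin (V → Fin k)).injective
  have h1 : numColorings (cliqueShadow G v r) k
      = Nat.card (CliqueShadowAux.ShadowCol G v r k) := rfl
  rw [h1, Nat.card_congr (CliqueShadowAux.mainEquiv hr), Nat.card_prod]
  have h2 : Nat.card (Equiv.Perm (Fin r)) = r.factorial := by
    rw [Nat.card_eq_fintype_card, Fintype.card_perm, Fintype.card_fin]
  rw [h2, mul_comm]
  rfl
end

section
/- Every induced r-clique in the k-coloring graph C_k(G) consists of r proper k-colorings of G that pairwise agree on all vertices except a single common vertex v, at which they take r pairwise distinct colors (for r ≥ 2). -/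
lemma coloringGraph_adj {V : Type} {G : SimpleGraph V} {k : ℕ}
    {f g : {f : V → Fin k // ∀ u w, G.Adj u w → f u ≠ f w}}
    (h : (coloringGraph G k).Adj f g) :
    ∃ v, (∀ u, u ≠ v → f.1 u = g.1 u) ∧ f.1 v ≠ g.1 v := by
  obtain ⟨hne, h⟩ := h
  have : ∃ v, ∀ u, u ≠ v → f.1 u = g.1 u := by
    rcases h with ⟨v, hv⟩ | ⟨v, hv⟩
    · exact ⟨v, hv⟩
    · exact ⟨v, fun u hu => (hv u hu).symm⟩
  obtain ⟨v, hv⟩ := this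
  refine ⟨v, hv, fun hfv => hne ?_⟩
  apply Subtype.ext
  funext u
  by_cases hu : u = v
  · rw [hu]; exact hfv
  · exact hv u hu

/-- Every induced `r`-clique (`r ≥ 2`) in `C_k(G)` consists of `r` proper `k`-colorings
of `G` that pairwise agree on all vertices except a single common vertex `v`, at which
they take pairwise distinct colors. -/
theorem clique_in_coloring_graph_structure {V : Type} [Fintype V] (G : SimpleGraph V)
    (k : ℕ) (r : ℕ) (hr : 2 ≤ r)
    (S : Finset {f : V → Fin k // ∀ u w, G.Adj u w → f u ≠ f w})
    (hS : (coloringGraph G k).IsNClique r S) :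
    ∃ v : V,
      (∀ f ∈ S, ∀ g ∈ S, ∀ u, u ≠ v → f.1 u = g.1 u) ∧
      (∀ f ∈ S, ∀ g ∈ S, f ≠ g → f.1 v ≠ g.1 v) := by
  obtain ⟨hclique, hcard⟩ := hS
  have h2 : 2 ≤ S.card := hcard ▸ hr
  obtain ⟨f0, hf0, g0, hg0, hfg0⟩ := Finset.one_lt_card.mp h2
  obtain ⟨v, hv, hvne⟩ := coloringGraph_adj (hclique hf0 hg0 hfg0)
  have key : ∀ h ∈ S, ∀ u, u ≠ v → h.1 u = f0.1 u := by
    intro h hh u hu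
    by_cases h1 : h = f0
    · rw [h1]
    by_cases h2' : h = g0
    · rw [h2', ← hv u hu]
    obtain ⟨w, hw, hwne⟩ := coloringGraph_adj (hclique hh hf0 h1)
    by_cases hwv : w = v
    · exact hw u (hwv ▸ hu)
    · exfalso
      obtain ⟨w', hw', hwne'⟩ := coloringGraph_adj (hclique hh hg0 h2')
      have hv' : h.1 v ≠ g0.1 v := by
        rw [hw v (fun h => hwv h.symm)]
        exact hvne
      have : w' = v := by
        by_contra hc
        exact hv' (hw' v (fun h => hc h.symm))
      have hwv' : h.1 w ≠ g0.1 w := by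
        rw [← hv w hwv]
        exact hwne
      exact hwv' (hw' w (this ▸ hwv))
  refine ⟨v, fun f hf g hg u hu => by rw [key f hf u hu, key g hg u hu], ?_⟩
  intro f hf g hg hne
  obtain ⟨w, hw, hwne⟩ := coloringGraph_adj (hclique hf hg hne)
  by_cases hwv : w = v
  · exact hwv ▸ hwne
  · exact absurd (by rw [key f hf w hwv, key g hg w hwv]) hwne
end

section
/- In any induced 6-cycle in the coloring graph C_k(G), the set of vertices of G whose color differs between some two colorings of the 6-cycle has size exactly 2 or exactly 3; if it has size 2 then each of the two vertices changes color exactly 3 times around the cycle, and if it has size 3 then each of the three vertices changes color exactly 2 times around the cycle. -/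
/-- In any induced 6-cycle `φ₀φ₁…φ₅` in `C_k(G)`, the set `D` of vertices of `G` that
change color has size exactly 2 or 3; if `|D| = 2` each vertex of `D` changes color
exactly 3 times around the cycle, and if `|D| = 3` each changes exactly 2 times. -/
theorem induced_hexagon_structure {V : Type} [Fintype V] (G : SimpleGraph V) (k : ℕ)
    (φ : ZMod 6 → {f : V → Fin k // ∀ u w, G.Adj u w → f u ≠ f w})
    (hinj : Function.Injective φ)
    (hind : ∀ i j : ZMod 6,
      (coloringGraph G k).Adj (φ i) (φ j) ↔ (j = i + 1 ∨ i = j + 1)) :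
    (({v : V | ∃ i j : ZMod 6, (φ i).1 v ≠ (φ j).1 v}).ncard = 2 ∨
     ({v : V | ∃ i j : ZMod 6, (φ i).1 v ≠ (φ j).1 v}).ncard = 3) ∧
    (({v : V | ∃ i j : ZMod 6, (φ i).1 v ≠ (φ j).1 v}).ncard = 2 →
      ∀ v ∈ {v : V | ∃ i j : ZMod 6, (φ i).1 v ≠ (φ j).1 v},
        Nat.card {i : ZMod 6 // (φ i).1 v ≠ (φ (i + 1)).1 v} = 3) ∧
    (({v : V | ∃ i j : ZMod 6, (φ i).1 v ≠ (φ j).1 v}).ncard = 3 →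
      ∀ v ∈ {v : V | ∃ i j : ZMod 6, (φ i).1 v ≠ (φ j).1 v},
        Nat.card {i : ZMod 6 // (φ i).1 v ≠ (φ (i + 1)).1 v} = 2) := by
  classical
  have hφne : ∀ i j : ZMod 6, i ≠ j → φ i ≠ φ j := fun i j h e => h (hinj e)
  have hadj : ∀ i : ZMod 6, (coloringGraph G k).Adj (φ i) (φ (i + 1)) :=
    fun i => (hind i (i + 1)).mpr (Or.inl rfl)
  have hex : ∀ i : ZMod 6, ∃ v, ∀ u, u ≠ v → (φ i).1 u = (φ (i + 1)).1 u := by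
    intro i
    have h := hadj i
    rw [coloringGraph, SimpleGraph.fromRel_adj] at h
    rcases h.2 with ⟨v, hv⟩ | ⟨v, hv⟩
    · exact ⟨v, hv⟩
    · exact ⟨v, fun u hu => (hv u hu).symm⟩
  choose c hc using hex
  have hne1 : ∀ i : ZMod 6, i ≠ i + 1 := by decide
  have hne : ∀ i : ZMod 6, (φ i).1 (c i) ≠ (φ (i + 1)).1 (c i) := by
    intro i h
    apply hφne i (i + 1) (hne1 i)
    apply Subtype.ext; funext u
    by_cases hu : u = c i
    · subst hu; exact h
    · exact hc i u hu
  have changeIff : ∀ (i : ZMod 6) (v : V),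
      ((φ i).1 v ≠ (φ (i + 1)).1 v) ↔ c i = v := by
    intro i v
    constructor
    · intro h
      by_contra h'
      exact h (hc i v fun e => h' e.symm)
    · rintro rfl; exact hne i
  -- key lemma: consecutive change-vertices are distinct
  have hL : ∀ i : ZMod 6, c i ≠ c (i + 1) := by
    intro i h
    have hadd : i + 1 + 1 = i + 2 := by ring
    have hA : (coloringGraph G k).Adj (φ i) (φ (i + 2)) := by
      rw [coloringGraph, SimpleGraph.fromRel_adj]
      refine ⟨hφne i (i+2) ((by decide : ∀ j : ZMod 6, j ≠ j + 2) i), Or.inl ⟨c i, fun u hu => ?_⟩⟩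
      have h1 := hc i u hu
      have h2 := hc (i + 1) u (by rw [← h]; exact hu)
      rw [hadd] at h2
      exact h1.trans h2
    have := (hind i (i + 2)).mp hA
    exact (by decide : ∀ i : ZMod 6, ¬(i + 2 = i + 1 ∨ i = i + 2 + 1)) i this
  -- each change-vertex occurs at least twice
  have hB : ∀ m : ZMod 6, ∃ i, i ≠ m ∧ c i = c m := by
    intro m
    by_contra h
    push_neg at h
    have step : ∀ t : ZMod 6, t ≠ 0 → (φ (m + t)).1 (c m) = (φ (m + t + 1)).1 (c m) := by
      intro t ht
      refine hc (m + t) (c m) fun e => ?_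
      have hmt : m + t ≠ m := by
        intro hh
        exact ht (by rwa [add_eq_left] at hh)
      exact h (m + t) hmt e.symm
    have e1 := step 1 (by decide)
    have e2 := step 2 (by decide)
    have e3 := step 3 (by decide)
    have e4 := step 4 (by decide)
    have e5 := step 5 (by decide)
    have a1 : m + 1 + 1 = m + 2 := by ring
    have a2 : m + 2 + 1 = m + 3 := by ring
    have a3 : m + 3 + 1 = m + 4 := by ring
    have a4 : m + 4 + 1 = m + 5 := by ring
    have a5 : m + 5 + 1 = m := (by decide : ∀ x : ZMod 6, x + 5 + 1 = x) m
    rw [a1] at e1; rw [a2] at e2; rw [a3] at e3; rw [a4] at e4; rw [a5] at e5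
    exact hne m ((((e1.trans e2).trans e3).trans e4).trans e5).symm
  -- the set D equals the range of c
  have hD : {v : V | ∃ i j : ZMod 6, (φ i).1 v ≠ (φ j).1 v} = Set.range c := by
    ext v
    simp only [Set.mem_setOf_eq, Set.mem_range]
    constructor
    · rintro ⟨i, j, hij⟩
      by_contra h
      push_neg at h
      have step : ∀ i : ZMod 6, (φ i).1 v = (φ (i + 1)).1 v :=
        fun i => hc i v fun e => h i e.symm
      have key : ∀ (t : ℕ) (i : ZMod 6), (φ i).1 v = (φ (i + (t : ZMod 6))).1 v := by
        intro t
        induction t with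
        | zero => intro i; simp
        | succ n ih =>
          intro i
          have : i + ((n + 1 : ℕ) : ZMod 6) = (i + (n : ZMod 6)) + 1 := by push_cast; ring
          rw [this]
          exact (ih i).trans (step (i + (n : ZMod 6)))
      have : (φ i).1 v = (φ j).1 v := by
        have := key (j - i).val i
        rwa [ZMod.natCast_val, ZMod.cast_id, add_sub_cancel] at this
      exact hij this
    · rintro ⟨m, rfl⟩
      exact ⟨m, m + 1, hne m⟩
  set n : V → ℕ := fun v => (Finset.univ.filter (fun i : ZMod 6 => c i = v)).card with hn
  have hcard : ∀ v : V, Nat.card {i : ZMod 6 // (φ i).1 v ≠ (φ (i + 1)).1 v} = n v := by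
    intro v
    rw [Nat.card_eq_fintype_card, Fintype.card_subtype]
    congr 1
    apply Finset.filter_congr
    intro i _
    simpa using changeIff i v
  set I : Finset V := Finset.univ.image c with hI
  have hDI : {v : V | ∃ i j : ZMod 6, (φ i).1 v ≠ (φ j).1 v} = (I : Set V) := by
    rw [hD, hI]; simp
  have hsum : ∑ v ∈ I, n v = 6 := by
    rw [hI, hn]
    rw [← Finset.card_eq_sum_card_image c Finset.univ]
    simp
  have hlow : ∀ v ∈ I, 2 ≤ n v := by
    intro v hv
    rw [hI] at hv
    obtain ⟨m, _, rfl⟩ := Finset.mem_image.mp hv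
    obtain ⟨i, him, hicm⟩ := hB m
    refine Finset.one_lt_card.mpr ⟨i, ?_, m, ?_, him⟩
    · simp [hicm]
    · simp
  have hhigh : ∀ v : V, n v ≤ 3 := by
    intro v
    refine (by decide : ∀ S : Finset (ZMod 6), (∀ i ∈ S, i + 1 ∉ S) → S.card ≤ 3) _ ?_
    intro i hi hi1
    simp only [Finset.mem_filter, Finset.mem_univ, true_and] at hi hi1
    exact hL i (hi.trans hi1.symm)
  have hI2 : 2 ≤ I.card := by
    refine Finset.one_lt_card.mpr ⟨c 0, ?_, c 1, ?_, ?_⟩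
    · exact Finset.mem_image_of_mem c (Finset.mem_univ 0)
    · exact Finset.mem_image_of_mem c (Finset.mem_univ 1)
    · have := hL 0; rwa [(by decide : (0 : ZMod 6) + 1 = 1)] at this
  have hI3 : I.card ≤ 3 := by
    have h1 : I.card * 2 ≤ ∑ v ∈ I, n v := by
      calc I.card * 2 = ∑ _v ∈ I, 2 := by rw [Finset.sum_const, smul_eq_mul, mul_comm]
      _ ≤ ∑ v ∈ I, n v := Finset.sum_le_sum hlow
    omega
  -- bounds on n v for v ∈ I
  have hbounds : ∀ v ∈ I, 6 - 3 * (I.card - 1) ≤ n v ∧ n v ≤ 6 - 2 * (I.card - 1) := by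
    intro v hv
    have hsplit : n v + ∑ w ∈ I.erase v, n w = 6 := by
      rw [Finset.add_sum_erase I n hv]; exact hsum
    have hcarde : (I.erase v).card = I.card - 1 := Finset.card_erase_of_mem hv
    have hub : ∑ w ∈ I.erase v, n w ≤ 3 * (I.card - 1) := by
      calc ∑ w ∈ I.erase v, n w ≤ ∑ _w ∈ I.erase v, 3 :=
            Finset.sum_le_sum fun w _ => hhigh w
      _ = 3 * (I.card - 1) := by rw [Finset.sum_const, smul_eq_mul, mul_comm, hcarde]
    have hlb : 2 * (I.card - 1) ≤ ∑ w ∈ I.erase v, n w := by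
      calc 2 * (I.card - 1) = ∑ _w ∈ I.erase v, 2 := by
            rw [Finset.sum_const, smul_eq_mul, mul_comm, hcarde]
      _ ≤ ∑ w ∈ I.erase v, n w :=
            Finset.sum_le_sum fun w hw => hlow w (Finset.mem_of_mem_erase hw)
    omega
  have hncard : ({v : V | ∃ i j : ZMod 6, (φ i).1 v ≠ (φ j).1 v}).ncard = I.card := by
    rw [hDI, Set.ncard_coe_finset]
  refine ⟨?_, ?_, ?_⟩
  · rw [hncard]; omega
  · intro h2 v hv
    rw [hncard] at h2
    rw [hDI] at hv
    have hvI : v ∈ I := hv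
    have := hbounds v hvI
    have := hhigh v
    rw [hcard v]
    omega
  · intro h3 v hv
    rw [hncard] at h3
    rw [hDI] at hv
    have hvI : v ∈ I := hv
    have := hbounds v hvI
    have := hlow v hvI
    rw [hcard v]
    omega
end

section
/- For a tree T on n vertices, the number of edges in the coloring graph C_k(T) equals (1/2)·Σ_{v∈V(T)} k·(k-1)^{n-deg(v)}·(k-2)^{deg(v)}. -/
open Finset

theorem Finset.sum_card_erase_of_subset {α : Type*} [DecidableEq α] {F S : Finset α}
    (h : F ⊆ S) :
    ∑ x ∈ S, #(F.erase x) = (#S - 1) * #F := by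
  have hsplit : ∀ x ∈ S, #(F.erase x) + (if x ∈ F then 1 else 0) = #F := by
    intro x _
    split_ifs with hx
    · exact card_erase_add_one hx
    · simp [erase_eq_of_notMem hx]
  have hmem : ∑ x ∈ S, (if x ∈ F then 1 else 0) = #F := by
    rw [sum_ite_mem, inter_eq_right.2 h, sum_const, smul_eq_mul, mul_one]
  have htotal := sum_congr rfl hsplit
  rw [sum_add_distrib, hmem, sum_const, smul_eq_mul] at htotal
  rw [Nat.sub_one_mul]
  omega

namespace SimpleGraph

variable {V : Type} {k : ℕ}

abbrev ProperColoring (G : SimpleGraph V) (k : ℕ) : Type :=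
  {f : V → Fin k // ∀ u w, G.Adj u w → f u ≠ f w}

open scoped Classical in
noncomputable def freeColors (G : SimpleGraph V) (f : V → Fin k) (v : V) : Finset (Fin k) :=
  {c | c ≠ f v ∧ ∀ u, G.Adj v u → c ≠ f u}

variable {G : SimpleGraph V}

theorem mem_freeColors {f : V → Fin k} {v : V} {c : Fin k} :
    c ∈ G.freeColors f v ↔ c ≠ f v ∧ ∀ u, G.Adj v u → c ≠ f u := by
  simp [freeColors]

theorem update_adj_ne [DecidableEq V] {f : V → Fin k} (hf : ∀ u w, G.Adj u w → f u ≠ f w)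
    {v : V} {c : Fin k} (hc : c ∈ G.freeColors f v) :
    ∀ u w, G.Adj u w → Function.update f v c u ≠ Function.update f v c w := by
  rw [mem_freeColors] at hc
  intro a b hab
  rcases eq_or_ne a v with rfl | ha
  · simpa [Function.update_of_ne (G.ne_of_adj hab).symm] using hc.2 b hab
  rcases eq_or_ne b v with rfl | hb
  · simpa [Function.update_of_ne ha] using (hc.2 a hab.symm).symm
  · simpa [Function.update_of_ne ha, Function.update_of_ne hb] using hf a b hab

def recolor [DecidableEq V] (f : G.ProperColoring k) (p : Σ v, G.freeColors f.1 v) :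
    G.ProperColoring k :=
  ⟨Function.update f.1 p.1 p.2, update_adj_ne f.2 p.2.2⟩

theorem recolor_injective [DecidableEq V] (f : G.ProperColoring k) :
    Function.Injective (recolor f) := by
  rintro ⟨v, c, hc⟩ ⟨v', c', hc'⟩ h
  have h := congrArg Subtype.val h
  obtain rfl : v = v' := by
    by_contra hvv'
    have := congrFun h v
    simp only [recolor, Function.update_self, Function.update_of_ne hvv'] at this
    exact (mem_freeColors.1 hc).1 this
  obtain rfl : c = c' := by simpa [recolor] using congrFun h v
  rfl

theorem range_recolor [DecidableEq V] (f : G.ProperColoring k) :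
    Set.range (recolor f) = (coloringGraph G k).neighborSet f := by
  ext g
  simp only [Set.mem_range, mem_neighborSet, coloringGraph, fromRel_adj]
  constructor
  · rintro ⟨⟨v, c, hc⟩, rfl⟩
    refine ⟨fun h => (mem_freeColors.1 hc).1 ?_, .inl ⟨v, fun u hu => ?_⟩⟩
    · simpa [recolor] using (congrFun (congrArg Subtype.val h) v).symm
    · simp [recolor, Function.update_of_ne hu]
  · rintro ⟨hne, h⟩
    obtain ⟨v, hv⟩ : ∃ v, ∀ u, u ≠ v → f.1 u = g.1 u := h.elim id fun ⟨v, hv⟩ =>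
      ⟨v, fun u hu => (hv u hu).symm⟩
    have hg : g.1 = Function.update f.1 v (g.1 v) := by
      funext u
      rcases eq_or_ne u v with rfl | hu
      · simp
      · simp [Function.update_of_ne hu, hv u hu]
    have hc : g.1 v ∈ G.freeColors f.1 v := by
      refine mem_freeColors.2 ⟨fun h => hne (Subtype.ext ?_), fun u hu h => ?_⟩
      · rw [hg, h, Function.update_eq_self]
      · exact g.2 v u hu (h.trans (hv u (G.ne_of_adj hu).symm))
    exact ⟨⟨v, _, hc⟩, Subtype.ext hg.symm⟩

theorem ncard_neighborSet_coloringGraph [Fintype V] (f : G.ProperColoring k) :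
    ((coloringGraph G k).neighborSet f).ncard = ∑ v, #(G.freeColors f.1 v) := by
  classical
  rw [← range_recolor, Set.ncard_range_of_injective (recolor_injective f), Nat.card_sigma]
  simp

/-- The darts of `coloringGraph G k` that recolour `v` (see `range_recolor`). -/
abbrev Recoloring (G : SimpleGraph V) (k : ℕ) (v : V) : Type :=
  Σ f : G.ProperColoring k, G.freeColors f.1 v

theorem two_mul_ncard_edgeSet_coloringGraph [Fintype V] :
    2 * (coloringGraph G k).edgeSet.ncard = ∑ v, Nat.card (G.Recoloring k v) := by
  classical
  simp_rw [Nat.card_sigma, Nat.card_eq_fintype_card, Fintype.card_coe]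
  rw [Finset.sum_comm]
  simp_rw [← ncard_neighborSet_coloringGraph, Set.ncard_eq_toFinset_card']
  exact (sum_degrees_eq_twice_card_edges _).symm

section ExtendColoring

variable [DecidableEq V] {l : V}

def extendColoring (l : V) (f : ({l}ᶜ : Set V) → Fin k) (x : Fin k) : V → Fin k :=
  fun u => if h : u = l then x else f ⟨u, h⟩

@[simp]
theorem extendColoring_self (f : ({l}ᶜ : Set V) → Fin k) (x : Fin k) :
    extendColoring l f x l = x := by
  simp [extendColoring]

theorem extendColoring_of_ne (f : ({l}ᶜ : Set V) → Fin k) (x : Fin k) {u : V} (hu : u ≠ l) :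
    extendColoring l f x u = f ⟨u, hu⟩ :=
  dif_neg hu

theorem extendColoring_adj_ne {f : (G.induce {l}ᶜ).ProperColoring k}
    {x : Fin k} (hx : ∀ u : ({l}ᶜ : Set V), G.Adj l u → x ≠ f.1 u) :
    ∀ a b, G.Adj a b → extendColoring l f.1 x a ≠ extendColoring l f.1 x b := by
  intro a b hab
  rcases eq_or_ne a l with rfl | ha
  · have hb : b ≠ a := (G.ne_of_adj hab).symm
    simpa [extendColoring_of_ne _ _ hb] using hx ⟨b, hb⟩ hab
  rcases eq_or_ne b l with rfl | hb
  · simpa [extendColoring_of_ne _ _ ha] using (hx ⟨a, ha⟩ hab.symm).symm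
  · simpa [extendColoring_of_ne _ _ ha, extendColoring_of_ne _ _ hb]
      using f.2 ⟨a, ha⟩ ⟨b, hb⟩ hab

def properColoringEquivSigma (G : SimpleGraph V) (l : V) :
    G.ProperColoring k ≃ Σ f : (G.induce {l}ᶜ).ProperColoring k,
      {x : Fin k // ∀ u : ({l}ᶜ : Set V), G.Adj l u → x ≠ f.1 u} where
  toFun f := ⟨⟨fun u => f.1 u, fun a b h => f.2 a b h⟩, f.1 l, fun u hu => f.2 l u hu⟩
  invFun p := ⟨extendColoring l p.1.1 p.2.1, extendColoring_adj_ne p.2.2⟩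
  left_inv f := Subtype.ext <| funext fun u => by
    by_cases h : u = l
    · subst h; simp
    · exact extendColoring_of_ne _ _ h
  right_inv p := Sigma.subtype_ext (Subtype.ext <| funext fun u => extendColoring_of_ne _ _ u.2)
    (extendColoring_self _ _)

theorem forall_adj_ne_extendColoring_iff {v : V} {f : ({l}ᶜ : Set V) → Fin k} {x c : Fin k} :
    (∀ u, G.Adj v u → c ≠ extendColoring l f x u) ↔
      (G.Adj v l → c ≠ x) ∧ ∀ u : ({l}ᶜ : Set V), G.Adj v u → c ≠ f u := by
  constructor
  · intro h
    exact ⟨fun hvl => by simpa using h l hvl,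
      fun u hu => by simpa [extendColoring_of_ne _ _ u.2] using h u hu⟩
  · rintro ⟨hl, h⟩ u hu
    by_cases hul : u = l
    · subst hul; simpa using hl hu
    · simpa [extendColoring_of_ne _ _ hul] using h ⟨u, hul⟩ hu

theorem freeColors_extendColoring_of_not_adj {v : V} (hv : v ≠ l) (hvl : ¬G.Adj v l)
    (f : ({l}ᶜ : Set V) → Fin k) (x : Fin k) :
    G.freeColors (extendColoring l f x) v = (G.induce {l}ᶜ).freeColors f ⟨v, hv⟩ := by
  ext c
  simp only [mem_freeColors, forall_adj_ne_extendColoring_iff, hvl, false_implies, true_and,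
    comap_adj, Function.Embedding.subtype_apply]
  rw [extendColoring_of_ne f x hv]

theorem freeColors_extendColoring_of_adj {v : V} (hv : v ≠ l) (hvl : G.Adj v l)
    (f : ({l}ᶜ : Set V) → Fin k) (x : Fin k) :
    G.freeColors (extendColoring l f x) v =
      ((G.induce {l}ᶜ).freeColors f ⟨v, hv⟩).erase x := by
  ext c
  simp only [mem_freeColors, forall_adj_ne_extendColoring_iff, hvl, true_implies,
    comap_adj, Function.Embedding.subtype_apply, Finset.mem_erase]
  rw [extendColoring_of_ne f x hv]
  tauto

end ExtendColoring

theorem card_recoloring_of_leaf [Finite V] [DecidableEq V] {l w v : V}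
    (hl : ∀ u, G.Adj l u ↔ u = w) (hv : v ≠ l) :
    Nat.card (G.Recoloring k v) =
      (if w = v then k - 2 else k - 1) * Nat.card ((G.induce {l}ᶜ).Recoloring k ⟨v, hv⟩) := by
  classical
  have := Fintype.ofFinite V
  have hw : w ∈ ({l}ᶜ : Set V) := fun h => G.loopless.irrefl l ((hl l).2 h.symm)
  have hfiber (f : (G.induce {l}ᶜ).ProperColoring k) (x : Fin k) :
      x ∈ univ.erase (f.1 ⟨w, hw⟩) ↔
        ∀ u : ({l}ᶜ : Set V), G.Adj l u → x ≠ f.1 u := by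
    simp only [Finset.mem_erase, Finset.mem_univ, and_true, hl]
    exact ⟨fun h u hu => by rwa [show u = ⟨w, hw⟩ from Subtype.ext hu],
      fun h => h ⟨w, hw⟩ rfl⟩
  have hsum (f : (G.induce {l}ᶜ).ProperColoring k) :
      ∑ x ∈ univ.erase (f.1 ⟨w, hw⟩), #(G.freeColors (extendColoring l f.1 x) v) =
        (if w = v then k - 2 else k - 1) * #((G.induce {l}ᶜ).freeColors f.1 ⟨v, hv⟩) := by
    split_ifs with hwv
    · simp_rw [freeColors_extendColoring_of_adj hv ((hl v).2 hwv.symm).symm]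
      rw [sum_card_erase_of_subset, card_erase_of_mem (mem_univ _), card_univ, Fintype.card_fin]
      · rw [Nat.sub_sub]
      · intro c hc
        have hwv' : (⟨w, hw⟩ : ({l}ᶜ : Set V)) = ⟨v, hv⟩ := Subtype.ext hwv
        simpa [hwv'] using (mem_freeColors.1 hc).1
    · have hvl : ¬G.Adj v l := fun h => hwv ((hl v).1 h.symm).symm
      simp_rw [freeColors_extendColoring_of_not_adj hv hvl, sum_const, smul_eq_mul,
        card_erase_of_mem (mem_univ _), card_univ, Fintype.card_fin]
  simp only [Recoloring, Nat.card_eq_fintype_card, Fintype.card_sigma, Fintype.card_coe]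
  rw [← (properColoringEquivSigma G l).symm.sum_comp, Fintype.sum_sigma, mul_sum]
  refine sum_congr rfl fun f _ => ?_
  rw [← hsum f, sum_subtype _ (hfiber f)]
  rfl

theorem ncard_neighborSet_induce_compl_singleton {l v : V} (hv : v ∈ ({l}ᶜ : Set V)) :
    ((G.induce {l}ᶜ).neighborSet ⟨v, hv⟩).ncard = (G.neighborSet v \ {l}).ncard := by
  rw [neighborSet_induce]
  exact Set.ncard_subtype _ _

theorem ncard_neighborSet_lt_card [Finite V] (v : V) : (G.neighborSet v).ncard < Nat.card V :=
  Set.ncard_lt_card fun h => G.loopless.irrefl v (h ▸ Set.mem_univ v : v ∈ G.neighborSet v)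

theorem card_recoloring_of_subsingleton [Subsingleton V] (v : V) :
    Nat.card (G.Recoloring k v) = k * (k - 1) := by
  classical
  have hnadj (a b : V) : ¬G.Adj a b := fun h => G.ne_of_adj h (Subsingleton.elim a b)
  have hfree (f : V → Fin k) : G.freeColors f v = univ.erase (f v) := by
    ext c
    simp [mem_freeColors, hnadj]
  have : Nonempty V := ⟨v⟩
  have hcard : Nat.card (G.ProperColoring k) = k := by
    rw [Nat.card_congr (Equiv.subtypeUnivEquiv fun f a b hab => absurd hab (hnadj a b)),
      Nat.card_fun, Nat.card_unique (α := V), pow_one, Nat.card_eq_fintype_card, Fintype.card_fin]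
  have := Fintype.ofFinite V
  rw [Nat.card_eq_fintype_card] at hcard
  rw [Recoloring, Nat.card_sigma]
  simp only [hfree, Nat.card_eq_fintype_card, Fintype.card_coe, card_erase_of_mem (mem_univ _),
    card_univ, Fintype.card_fin, sum_const, smul_eq_mul, hcard]

theorem IsTree.exists_leaf_ne [Finite V] [Nontrivial V] {T : SimpleGraph V} (hT : T.IsTree)
    (v : V) : ∃ l w, l ≠ v ∧ ∀ u, T.Adj l u ↔ u = w := by
  classical
  have := Fintype.ofFinite V
  obtain ⟨a, b, hab, ha, hb⟩ := hT.exists_ne_and_degree_eq_one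
  obtain ⟨l, hlv, hl⟩ : ∃ l, l ≠ v ∧ T.degree l = 1 := by
    by_cases hav : a = v
    · exact ⟨b, fun h => hab (hav.trans h.symm), hb⟩
    · exact ⟨a, hav, ha⟩
  obtain ⟨w, hw, hw'⟩ := degree_eq_one_iff_existsUnique_adj.1 hl
  exact ⟨l, w, hlv, fun u => ⟨hw' u, fun h => h ▸ hw⟩⟩

theorem IsTree.induce_compl_singleton_of_leaf {T : SimpleGraph V} (hT : T.IsTree) {l w : V}
    (hl : ∀ u, T.Adj l u ↔ u = w) : (T.induce {l}ᶜ).IsTree := by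
  have hw : w ∈ ({l}ᶜ : Set V) := fun h => T.loopless.irrefl l ((hl l).2 h.symm)
  have : Nonempty ({l}ᶜ : Set V) := ⟨⟨w, hw⟩⟩
  refine ⟨⟨hT.connected.preconnected.induce_of_degree_eq_one fun u hu => ?_⟩,
    hT.isAcyclic.induce _⟩
  obtain rfl : u = l := by simpa using hu
  exact fun a ha b hb => ((hl a).1 ha).trans ((hl b).1 hb).symm

theorem IsTree.card_recoloring [Finite V] {T : SimpleGraph V} (hT : T.IsTree) (v : V) :
    Nat.card (T.Recoloring k v) =
      k * (k - 1) ^ (Nat.card V - (T.neighborSet v).ncard) *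
        (k - 2) ^ (T.neighborSet v).ncard := by
  induction hn : Nat.card V generalizing V with
  | zero => exact absurd hn (Nat.card_pos_iff.2 ⟨⟨v⟩, inferInstance⟩).ne'
  | succ n ih =>
    classical
    rcases subsingleton_or_nontrivial V with _ | _
    · have : Nonempty V := ⟨v⟩
      obtain rfl : n = 0 := by simpa [Nat.card_unique] using hn.symm
      simp [card_recoloring_of_subsingleton]
    obtain ⟨l, w, hlv, hl⟩ := hT.exists_leaf_ne v
    have hv : v ∈ ({l}ᶜ : Set V) := hlv.symm
    have hcard : Nat.card ({l}ᶜ : Set V) = n := by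
      rw [Nat.card_coe_set_eq, Set.ncard_compl, Set.ncard_singleton, hn, Nat.add_sub_cancel]
    have hd := T.ncard_neighborSet_lt_card v
    rw [card_recoloring_of_leaf hl hv, ih (hT.induce_compl_singleton_of_leaf hl) ⟨v, hv⟩ hcard,
      ncard_neighborSet_induce_compl_singleton]
    split_ifs with hwv
    · have hvl : l ∈ T.neighborSet v := ((hl v).2 hwv.symm).symm
      obtain ⟨d, hd'⟩ : ∃ d, (T.neighborSet v).ncard = d + 1 :=
        Nat.exists_eq_add_one.2 ((Set.ncard_pos).2 ⟨l, hvl⟩)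
      rw [Set.ncard_sdiff_singleton_of_mem hvl, hd', Nat.add_sub_cancel, Nat.add_sub_add_right,
        pow_succ (k - 2)]
      ring
    · have hvl : l ∉ T.neighborSet v := fun h => hwv ((hl v).1 h.symm).symm
      rw [Set.sdiff_singleton_eq_self hvl, Nat.sub_add_comm (by omega), pow_succ (k - 1)]
      ring

end SimpleGraph

/-- For a tree `T` on `n` vertices, the number of edges of the coloring graph `C_k(T)`
equals `(1/2)·Σ_{v} k·(k-1)^{n-deg v}·(k-2)^{deg v}` (stated multiplied through by 2). -/
theorem tree_coloring_graph_edge_count {V : Type} [Fintype V] (T : SimpleGraph V)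
    (hT : T.IsTree) (n : ℕ) (hn : Fintype.card V = n) (k : ℕ) :
    2 * ((coloringGraph T k).edgeSet.ncard) =
      ∑ v : V, k * (k - 1) ^ (n - (T.neighborSet v).ncard) *
        (k - 2) ^ (T.neighborSet v).ncard := by
  rw [SimpleGraph.two_mul_ncard_edgeSet_coloringGraph, ← hn, ← Nat.card_eq_fintype_card]
  exact Finset.sum_congr rfl fun v _ => hT.card_recoloring v
end

section
/- Let T be a tree on n vertices and S ⊆ V(T) with |S| = d. Form the shadow graph T_S by replacing each v ∈ S with an edge v₁v₂, joining v₁ and v₂ to all neighbors of v not in S, and for every edge vw of T with both endpoints in S adding all four edges between {v₁,v₂} and {w₁,w₂}. Then the number of proper k-colorings of T_S equals k·(k-1)^{n+d-1-deg(S)}·(k-2)^{deg(S)-int(S)}·(k-3)^{int(S)}, where deg(S) = Σ_{v∈S} deg(v) and int(S) is the number of edges of T with both endpoints in S. -/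
/-- The shadow graph `G_S`: each `v ∈ S` is replaced by an adjacent pair `v₁, v₂`, both
joined to all neighbors of `v` not in `S`, and for every edge of `G` with both endpoints
in `S` all four edges between the corresponding pairs are added. -/
def multiShadow {V : Type} (G : SimpleGraph V) (S : Finset V) :
    SimpleGraph ({u : V // u ∉ S} ⊕ ({u : V // u ∈ S} × Bool)) :=
  SimpleGraph.fromRel (fun x y =>
    match x, y with
    | Sum.inl a, Sum.inl b => G.Adj a.1 b.1
    | Sum.inl a, Sum.inr (w, _) => G.Adj a.1 w.1
    | Sum.inr _, Sum.inl _ => False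
    | Sum.inr (w, _), Sum.inr (x, _) => w = x ∨ G.Adj w.1 x.1)

/-- Sum of the degrees of the vertices in `S`. -/
noncomputable def degSum {V : Type} (G : SimpleGraph V) (S : Finset V) : ℕ :=
  ∑ v ∈ S, (G.neighborSet v).ncard

/-- The number of edges of `G` with both endpoints in `S`. -/
noncomputable def intEdges {V : Type} (G : SimpleGraph V) (S : Finset V) : ℕ :=
  {e : Sym2 V | e ∈ G.edgeSet ∧ ∀ x ∈ e, x ∈ S}.ncard


/-!
`T_S` is a clique blow-up of `T`: each vertex of `S` becomes a clique of size two, every other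
vertex a single vertex, and adjacent vertices of `T` become completely joined cliques. Deleting a
leaf `v` with neighbour `u` of `T` removes the clique of `v`, whose only neighbours outside it
form the clique of `u`; hence every coloring of the rest extends in exactly
`(k - c(u)) ⋯ (k - c(u) - c(v) + 1)` ways, where `c` is the clique size. Depending on which of
`v`, `u` lie in `S`, this factor is `k - 1`, `k - 2`, `(k - 1)(k - 2)` or `(k - 2)(k - 3)`, which
is how the formula changes as `n`, `|S|`, `deg(S)` and `int(S)` change. Induction on leaves
reduces everything to a single vertex. Since the exponents use truncated subtraction, the same
induction first proves `int(S) ≤ deg(S) < n + |S|`.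
-/

open SimpleGraph

section Colorings

variable {α β W W' : Type}

lemma numColorings_comap_equiv (H : SimpleGraph W) (e : W' ≃ W) (k : ℕ) :
    numColorings (H.comap e) k = numColorings H k :=
  Nat.card_congr <| (e.arrowCongr (Equiv.refl (Fin k))).subtypeEquiv fun f => by
    simp [e.forall_congr_left]

lemma numColorings_top [Finite W] (k : ℕ) :
    numColorings (⊤ : SimpleGraph W) k = k.descFactorial (Nat.card W) := by
  classical
  have := Fintype.ofFinite W
  have e : {f : W → Fin k // ∀ u w, (⊤ : SimpleGraph W).Adj u w → f u ≠ f w} ≃ (W ↪ Fin k) :=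
    { toFun := fun f => ⟨f.1, fun u w h => by_contra fun hne => f.2 u w hne h⟩
      invFun := fun f => ⟨f, fun u w huw h => huw (f.injective h)⟩
      left_inv := fun _ => rfl
      right_inv := fun _ => rfl }
  rw [numColorings, Nat.card_congr e, Nat.card_eq_fintype_card, Fintype.card_embedding_eq,
    Fintype.card_fin, Nat.card_eq_fintype_card]

def coloringsSumEquiv (H : SimpleGraph (α ⊕ β)) (N : Set α) (k : ℕ)
    (hβ : ∀ b b', b ≠ b' → H.Adj (.inr b) (.inr b'))
    (hcross : ∀ a b, H.Adj (.inl a) (.inr b) ↔ a ∈ N) :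
    {f : α ⊕ β → Fin k // ∀ u w, H.Adj u w → f u ≠ f w} ≃
      Σ g : {g : α → Fin k // ∀ u w, (H.comap Sum.inl).Adj u w → g u ≠ g w},
        (β ↪ ↥(g.1 '' N)ᶜ) where
  toFun f := ⟨⟨f.1 ∘ .inl, fun u w h => f.2 _ _ h⟩,
    ⟨fun b => ⟨f.1 (.inr b), fun ⟨a, ha, hab⟩ => f.2 _ _ ((hcross a b).2 ha) hab⟩,
      fun b b' h => by_contra fun hne => f.2 _ _ (hβ b b' hne) (congrArg Subtype.val h)⟩⟩
  invFun p := ⟨Sum.elim p.1.1 fun b => p.2 b, by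
    rintro (a | b) (a' | b') h
    · exact p.1.2 a a' h
    · exact fun he => (p.2 b').2 ⟨a, (hcross a b').1 h, he⟩
    · exact fun he => (p.2 b).2 ⟨a', (hcross a' b).1 h.symm, he.symm⟩
    · exact fun he => h.ne (congrArg _ (p.2.injective (Subtype.ext he)))⟩
  left_inv f := Subtype.ext <| funext fun x => by cases x <;> rfl
  right_inv _ := rfl

lemma numColorings_sum_eq_mul [Finite α] [Finite β] (H : SimpleGraph (α ⊕ β)) (N : Set α)
    (k : ℕ) (hN : ∀ a ∈ N, ∀ a' ∈ N, a ≠ a' → H.Adj (.inl a) (.inl a'))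
    (hβ : ∀ b b', b ≠ b' → H.Adj (.inr b) (.inr b'))
    (hcross : ∀ a b, H.Adj (.inl a) (.inr b) ↔ a ∈ N) :
    numColorings H k =
      numColorings (H.comap Sum.inl) k * (k - N.ncard).descFactorial (Nat.card β) := by
  classical
  have := Fintype.ofFinite α
  have := Fintype.ofFinite β
  have card_fiber (g : {g : α → Fin k // ∀ u w, (H.comap Sum.inl).Adj u w → g u ≠ g w}) :
      Nat.card (β ↪ ↥(g.1 '' N)ᶜ) = (k - N.ncard).descFactorial (Nat.card β) := by
    have hinj : Set.InjOn g.1 N := fun a ha a' ha' h =>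
      by_contra fun hne => g.2 a a' (hN a ha a' ha' hne) h
    rw [Nat.card_eq_fintype_card, Fintype.card_embedding_eq, ← Nat.card_eq_fintype_card,
      ← Nat.card_eq_fintype_card, Nat.card_coe_set_eq, Set.ncard_compl,
      hinj.ncard_image, Nat.card_eq_fintype_card, Fintype.card_fin]
  rw [numColorings, Nat.card_congr (coloringsSumEquiv H N k hβ hcross), Nat.card_sigma]
  simp only [card_fiber, Finset.sum_const, Finset.card_univ, smul_eq_mul, numColorings,
    Nat.card_eq_fintype_card]

lemma numColorings_eq_induce_mul [Finite W] (H : SimpleGraph W) (s N : Set W)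
    (k : ℕ) (hNs : N ⊆ s) (hN : H.IsClique N) (hs : H.IsClique sᶜ)
    (hcross : ∀ x ∈ s, ∀ y ∉ s, H.Adj x y ↔ x ∈ N) :
    numColorings H k = numColorings (H.induce s) k * (k - N.ncard).descFactorial sᶜ.ncard := by
  classical
  have hN' : (Subtype.val ⁻¹' N : Set s).ncard = N.ncard :=
    Set.ncard_preimage_of_injective_subset_range Subtype.val_injective (by simpa using hNs)
  rw [← numColorings_comap_equiv H (Equiv.Set.sumCompl s), numColorings_sum_eq_mul _
    (Subtype.val ⁻¹' N) k (fun a ha a' ha' hne => hN ha ha' (Subtype.coe_ne_coe.2 hne))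
    (fun b b' hne => hs b.2 b'.2 (Subtype.coe_ne_coe.2 hne))
    (fun a b => hcross a a.2 b b.2), hN']
  rfl

end Colorings

section Blowup

variable {V W : Type}

def IsCliqueBlowup (H : SimpleGraph W) (T : SimpleGraph V) (π : W → V) : Prop :=
  ∀ x y, H.Adj x y ↔ x ≠ y ∧ (π x = π y ∨ T.Adj (π x) (π y))

variable {H : SimpleGraph W} {T : SimpleGraph V} {π : W → V}

lemma IsCliqueBlowup.induce (hH : IsCliqueBlowup H T π) (s : Set V) :
    IsCliqueBlowup (H.induce (π ⁻¹' s)) (T.induce s) (s.restrictPreimage π) := by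
  intro x y
  simp [hH x.1 y.1, Subtype.ext_iff]

lemma ncard_restrictPreimage_preimage (s : Set V) (u : s) :
    (s.restrictPreimage π ⁻¹' {u}).ncard = (π ⁻¹' {u.1}).ncard := by
  rw [← Set.ncard_image_of_injective _ Subtype.val_injective]
  congr 1
  ext x
  simp only [Set.mem_image, Set.mem_preimage, Set.mem_singleton_iff, Subtype.ext_iff,
    Set.restrictPreimage_coe]
  exact ⟨fun ⟨y, hy, hyx⟩ => hyx ▸ hy, fun hx => ⟨⟨x, show π x ∈ s from hx ▸ u.2⟩, hx, rfl⟩⟩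

lemma IsCliqueBlowup.numColorings_eq_mul_of_leaf [Finite W] (hH : IsCliqueBlowup H T π)
    {v u : V} (hvu : T.Adj v u) (hleaf : ∀ w, T.Adj v w → w = u) (k : ℕ) :
    numColorings H k = numColorings (H.induce (π ⁻¹' {v}ᶜ)) k *
      (k - (π ⁻¹' {u}).ncard).descFactorial (π ⁻¹' {v}).ncard := by
  have hcompl : (π ⁻¹' {v}ᶜ)ᶜ = π ⁻¹' {v} := by rw [Set.preimage_compl, compl_compl]
  have hclique (w : V) : H.IsClique (π ⁻¹' {w}) := fun x hx y hy hne =>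
    (hH x y).2 ⟨hne, Or.inl (hx.trans hy.symm)⟩
  rw [numColorings_eq_induce_mul H _ (π ⁻¹' {u}) k, hcompl]
  · rintro x rfl (h : π x = v)
    exact hvu.ne h.symm
  · exact hclique u
  · rw [hcompl]
    exact hclique v
  · intro x (hx : π x ≠ v) y (hy : ¬π y ≠ v)
    rw [not_not] at hy
    have : T.Adj (π x) v ↔ π x = u := ⟨fun h => hleaf _ h.symm, fun h => h ▸ hvu.symm⟩
    simp [hH x y, hy, hx, this, show x ≠ y by rintro rfl; exact hx hy]

end Blowup

lemma Nat.card_compl_singleton_add_one {V : Type} [Finite V] (v : V) :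
    Nat.card ({v}ᶜ : Set V) + 1 = Nat.card V := by
  rw [Nat.card_coe_set_eq, Set.ncard_compl, Set.ncard_singleton]
  have : Nonempty V := ⟨v⟩
  have := Nat.card_pos (α := V)
  omega

theorem SimpleGraph.IsTree.induction_on_leaf {P : ∀ {V : Type}, SimpleGraph V → Prop}
    (unique : ∀ {V : Type} [Unique V] (T : SimpleGraph V), P T)
    (leaf : ∀ {V : Type} [Finite V] (T : SimpleGraph V) (v u : V), T.Adj v u →
      (∀ w, T.Adj v w → w = u) → (T.induce {v}ᶜ).IsTree → P (T.induce {v}ᶜ) → P T)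
    {V : Type} [Finite V] {T : SimpleGraph V} (hT : T.IsTree) : P T := by
  obtain ⟨n, hn⟩ : ∃ n, Nat.card V = n + 1 := by
    have := hT.connected.nonempty
    exact ⟨_, (Nat.succ_pred_eq_of_pos Nat.card_pos).symm⟩
  induction n generalizing V with
  | zero =>
    have := (Nat.card_eq_one_iff_unique.1 hn).1
    have := Classical.inhabited_of_nonempty hT.connected.nonempty
    have := Unique.mk' V
    exact unique T
  | succ n ih =>
    classical
    have := Fintype.ofFinite V
    have : Nontrivial V := Finite.one_lt_card_iff_nontrivial.1 (by omega)
    obtain ⟨v, hv⟩ := hT.exists_vert_degree_one_of_nontrivial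
    obtain ⟨u, hvu, hu⟩ := degree_eq_one_iff_existsUnique_adj.1 hv
    have hT' : (T.induce {v}ᶜ).IsTree :=
      ⟨hT.connected.induce_compl_singleton_of_degree_eq_one hv, hT.isAcyclic.induce _⟩
    refine leaf T v u hvu hu hT' (ih hT' ?_)
    have := Nat.card_compl_singleton_add_one v
    omega

section LeafDeletion

variable {V : Type} [Finite V] [DecidableEq V] {T : SimpleGraph V} {v u : V}

lemma ncard_neighborSet_eq_induce_compl_add (hvu : T.Adj v u) (hleaf : ∀ w, T.Adj v w → w = u)
    (x : ({v}ᶜ : Set V)) :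
    (T.neighborSet x).ncard =
      ((T.induce {v}ᶜ).neighborSet x).ncard + if x.1 = u then 1 else 0 := by
  have himage : Subtype.val '' (T.induce {v}ᶜ).neighborSet x = T.neighborSet x \ {v} := by
    rw [neighborSet_induce, Subtype.image_preimage_coe, Set.inter_comm, Set.sdiff_eq]
  rw [← Set.ncard_image_of_injective _ Subtype.val_injective, himage]
  by_cases hx : x.1 = u
  · rw [if_pos hx]
    exact (Set.ncard_sdiff_singleton_add_one (show T.Adj x v from hx ▸ hvu.symm)).symm
  · rw [if_neg hx, add_zero]
    exact congrArg Set.ncard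
      (Set.sdiff_singleton_eq_self fun h : T.Adj x v => hx (hleaf _ h.symm)).symm

lemma degSum_eq_induce_compl_add (hvu : T.Adj v u) (hleaf : ∀ w, T.Adj v w → w = u)
    (S : Finset V) :
    degSum T S = degSum (T.induce {v}ᶜ) (S.subtype (· ∈ ({v}ᶜ : Set V))) +
      (if v ∈ S then 1 else 0) + (if u ∈ S then 1 else 0) := by
  have hv : (T.neighborSet v).ncard = 1 := by
    rw [show T.neighborSet v = {u} from Set.ext fun w => ⟨hleaf w, fun h => h ▸ hvu⟩,
      Set.ncard_singleton]
  have hrest : ∑ x ∈ S.subtype (· ∈ ({v}ᶜ : Set V)), (T.neighborSet x).ncard =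
      degSum (T.induce {v}ᶜ) (S.subtype (· ∈ ({v}ᶜ : Set V))) + if u ∈ S then 1 else 0 := by
    simp only [ncard_neighborSet_eq_induce_compl_add hvu hleaf, Finset.sum_add_distrib, degSum]
    rw [Finset.sum_subtype_eq_sum_filter (fun x => if x = u then 1 else 0),
      Finset.sum_ite_eq']
    simp [hvu.ne']
  rw [degSum, ← Finset.sum_filter_add_sum_filter_not S (· ∈ ({v}ᶜ : Set V)),
    ← Finset.sum_subtype_eq_sum_filter, hrest]
  by_cases hvS : v ∈ S <;> simp [Finset.filter_eq', hvS, hv]; omega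

lemma intEdges_eq_induce_compl_add (hvu : T.Adj v u) (hleaf : ∀ w, T.Adj v w → w = u)
    (S : Finset V) :
    intEdges T S = intEdges (T.induce {v}ᶜ) (S.subtype (· ∈ ({v}ᶜ : Set V))) +
      if v ∈ S ∧ u ∈ S then 1 else 0 := by
  set X := {e : Sym2 V | e ∈ T.edgeSet ∧ ∀ x ∈ e, x ∈ S}
  have hpre : {e | e ∈ (T.induce {v}ᶜ).edgeSet ∧ ∀ x ∈ e, x ∈ S.subtype (· ∈ ({v}ᶜ : Set V))} =
      Sym2.map Subtype.val ⁻¹' (X \ {s(v, u)}) := by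
    ext e
    induction e using Sym2.ind with
    | _ a b =>
      have ha : a.1 ≠ v := a.2
      have hb : b.1 ≠ v := b.2
      simp [X, ha, hb]
  have hrange : X \ {s(v, u)} ⊆ Set.range (Sym2.map ((↑) : ({v}ᶜ : Set V) → V)) := by
    rintro e ⟨⟨he, -⟩, hne⟩
    have hv : ∀ x ∈ e, x ∈ ({v}ᶜ : Set V) := by
      induction e using Sym2.ind with
      | _ a b =>
        rintro x hx rfl
        rcases Sym2.mem_iff.1 hx with rfl | rfl
        · exact hne (by rw [hleaf b he]; rfl)
        · exact hne (by rw [hleaf a he.symm, Sym2.eq_swap]; rfl)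
    exact ⟨e.attachWith hv, Sym2.attachWith_map_subtypeVal hv⟩
  rw [intEdges, intEdges, hpre, Set.ncard_preimage_of_injective_subset_range
    (Sym2.map.injective Subtype.val_injective) hrange]
  by_cases h : v ∈ S ∧ u ∈ S
  · have hvuX : s(v, u) ∈ X := ⟨hvu, by simp [h]⟩
    rw [if_pos h, Set.ncard_sdiff_singleton_add_one hvuX]
  · have hvuX : s(v, u) ∉ X := fun h' =>
      h ⟨h'.2 v (Sym2.mem_mk_left _ _), h'.2 u (Sym2.mem_mk_right _ _)⟩
    rw [if_neg h, Set.sdiff_singleton_eq_self hvuX, add_zero]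

end LeafDeletion

lemma Finset.card_subtype_compl_singleton_add {V : Type} [DecidableEq V] (S : Finset V) (v : V) :
    (S.subtype (· ∈ ({v}ᶜ : Set V))).card + (if v ∈ S then 1 else 0) = S.card := by
  rw [Finset.card_subtype]
  by_cases hv : v ∈ S
  · simp [Finset.filter_ne', hv]
    have := Finset.card_pos.2 ⟨v, hv⟩
    omega
  · simp [Finset.filter_ne', hv]

lemma degSum_of_subsingleton {V : Type} [Subsingleton V] (T : SimpleGraph V) (S : Finset V) :
    degSum T S = 0 := by
  have hT : T = ⊥ := by ext x y; simp [Subsingleton.elim x y]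
  simp [hT, degSum]

lemma intEdges_of_subsingleton {V : Type} [Subsingleton V] (T : SimpleGraph V) (S : Finset V) :
    intEdges T S = 0 := by
  have hT : T = ⊥ := by ext x y; simp [Subsingleton.elim x y]
  simp [hT, intEdges]

theorem SimpleGraph.IsTree.intEdges_le_degSum_and_degSum_lt {V : Type} [Finite V]
    {T : SimpleGraph V} (hT : T.IsTree) (S : Finset V) :
    intEdges T S ≤ degSum T S ∧ degSum T S < Nat.card V + S.card := by
  revert S
  refine hT.induction_on_leaf (P := fun {V} T =>
    ∀ S : Finset V, intEdges T S ≤ degSum T S ∧ degSum T S < Nat.card V + S.card) ?_ ?_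
  · intro V _ T S
    simp [degSum_of_subsingleton, intEdges_of_subsingleton]
  · intro V _ T v u hvu hleaf _ ih S
    classical
    have h1 := ih (S.subtype (· ∈ ({v}ᶜ : Set V)))
    have h2 := degSum_eq_induce_compl_add hvu hleaf S
    have h3 := intEdges_eq_induce_compl_add hvu hleaf S
    have h4 := S.card_subtype_compl_singleton_add v
    have h5 := Nat.card_compl_singleton_add_one v
    by_cases hv : v ∈ S <;> by_cases hu : u ∈ S <;>
      simp only [hv, hu, and_self, and_true, and_false, ↓reduceIte] at h2 h3 h4 <;> omega

def treeShadowCount (k n d D I : ℕ) : ℕ :=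
  k * (k - 1) ^ (n + d - 1 - D) * (k - 2) ^ (D - I) * (k - 3) ^ I

lemma treeShadowCount_mul_descFactorial (k n d D I : ℕ) (p q : Prop) [Decidable p]
    [Decidable q] (hI : I ≤ D) (hD : D < n + d) :
    treeShadowCount k n d D I * (k - if q then 2 else 1).descFactorial (if p then 2 else 1) =
      treeShadowCount k (n + 1) (d + if p then 1 else 0)
        (D + (if p then 1 else 0) + (if q then 1 else 0)) (I + if p ∧ q then 1 else 0) := by
  unfold treeShadowCount
  by_cases hp : p <;> by_cases hq : q <;>
    simp only [hp, hq, ↓reduceIte, and_true, and_false, and_self, add_zero,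
      Nat.descFactorial_succ, Nat.descFactorial_zero, mul_one, Nat.sub_zero]
  · rw [show n + 1 + (d + 1) - 1 - (D + 1 + 1) = n + d - 1 - D by omega,
      show D + 1 + 1 - (I + 1) = D - I + 1 by omega, show k - 2 - 1 = k - 3 by omega]
    ring
  · rw [show n + 1 + (d + 1) - 1 - (D + 1) = n + d - 1 - D + 1 by omega,
      show D + 1 - I = D - I + 1 by omega, show k - 1 - 1 = k - 2 by omega]
    ring
  · rw [show n + 1 + d - 1 - (D + 1) = n + d - 1 - D by omega,
      show D + 1 - I = D - I + 1 by omega]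
    ring
  · rw [show n + 1 + d - 1 - D = n + d - 1 - D + 1 by omega]
    ring

theorem SimpleGraph.IsTree.numColorings_of_isCliqueBlowup {V : Type} [Finite V] [DecidableEq V]
    {T : SimpleGraph V} (hT : T.IsTree) {W : Type} [Finite W] {H : SimpleGraph W} {π : W → V}
    {S : Finset V} (hH : IsCliqueBlowup H T π)
    (hπ : ∀ v, (π ⁻¹' {v}).ncard = if v ∈ S then 2 else 1) (k : ℕ) :
    numColorings H k =
      treeShadowCount k (Nat.card V) S.card (degSum T S) (intEdges T S) := by
  refine hT.induction_on_leaf (P := fun {V} T => ∀ [DecidableEq V] {W : Type} [Finite W]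
    {H : SimpleGraph W} {π : W → V} {S : Finset V}, IsCliqueBlowup H T π →
      (∀ v, (π ⁻¹' {v}).ncard = if v ∈ S then 2 else 1) →
      numColorings H k = treeShadowCount k (Nat.card V) S.card (degSum T S) (intEdges T S))
    ?_ ?_ hH hπ
  · intro V _ T _ W _ H π S hH hπ
    have hH_top : H = ⊤ := by
      ext x y
      simp [hH x y, Subsingleton.elim (π x) (π y)]
    have hW : Nat.card W = if default ∈ S then 2 else 1 := by
      rw [← hπ default, ← Set.ncard_univ]
      congr
      exact (Set.eq_univ_of_forall fun x => Subsingleton.elim (π x) default).symm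
    rw [hH_top, numColorings_top, hW, degSum_of_subsingleton, intEdges_of_subsingleton,
      Nat.card_unique]
    by_cases hS : default ∈ S
    · rw [if_pos hS, show S = {default} from
        Finset.eq_singleton_iff_unique_mem.2 ⟨hS, fun x _ => Subsingleton.elim x default⟩]
      simp [treeShadowCount, Nat.descFactorial, mul_comm]
    · rw [if_neg hS, show S = ∅ from
        Finset.eq_empty_of_forall_notMem fun x hx => hS (Subsingleton.elim x default ▸ hx)]
      simp [treeShadowCount]
  · intro V _ T v u hvu hleaf hT' ih _ W _ H π S hH hπ
    obtain ⟨hI, hD⟩ := hT'.intEdges_le_degSum_and_degSum_lt (S.subtype (· ∈ ({v}ᶜ : Set V)))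
    rw [hH.numColorings_eq_mul_of_leaf hvu hleaf k, ih (hH.induce {v}ᶜ), hπ u, hπ v,
      treeShadowCount_mul_descFactorial _ _ _ _ _ _ _ hI hD,
      Nat.card_compl_singleton_add_one, S.card_subtype_compl_singleton_add,
      ← degSum_eq_induce_compl_add hvu hleaf, ← intEdges_eq_induce_compl_add hvu hleaf]
    intro x
    simp only [ncard_restrictPreimage_preimage, hπ, Finset.mem_subtype]

def multiShadowProj {V : Type} {S : Finset V} :
    {u : V // u ∉ S} ⊕ ({u : V // u ∈ S} × Bool) → V :=
  Sum.elim Subtype.val fun p => p.1.1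

lemma isCliqueBlowup_multiShadow {V : Type} (G : SimpleGraph V) (S : Finset V) :
    IsCliqueBlowup (multiShadow G S) G multiShadowProj := by
  have hne (a : {u // u ∉ S}) (w : S) : a.1 ≠ w.1 := fun h => a.2 (h ▸ w.2)
  rintro (a | ⟨w, b⟩) (a' | ⟨w', b'⟩) <;> simp only [multiShadow, fromRel_adj] <;>
    simp [multiShadowProj]
  · intro h
    have := Subtype.coe_ne_coe.2 h
    rw [G.adj_comm a'.1]
    tauto
  · exact fun h => absurd h (hne a w')
  · have := (hne a' w).symm
    rw [G.adj_comm a'.1]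
    tauto
  · rintro - (h | h)
    exacts [Or.inl h.symm, Or.inr h.symm]

lemma ncard_preimage_multiShadowProj {V : Type} [DecidableEq V] (S : Finset V) (v : V) :
    (multiShadowProj (S := S) ⁻¹' {v}).ncard = if v ∈ S then 2 else 1 := by
  split_ifs with hv
  · have : multiShadowProj (S := S) ⁻¹' {v} = {.inr (⟨v, hv⟩, true), .inr (⟨v, hv⟩, false)} := by
      ext (a | ⟨w, b⟩)
      · simpa [multiShadowProj] using fun h : a.1 = v => a.2 (h ▸ hv)
      · cases b <;> simp [multiShadowProj, Subtype.ext_iff]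
    rw [this, Set.ncard_pair (by simp)]
  · have : multiShadowProj (S := S) ⁻¹' {v} = {.inl ⟨v, hv⟩} := by
      ext (a | ⟨w, b⟩)
      · simp [multiShadowProj, Subtype.ext_iff]
      · simpa [multiShadowProj] using fun h : w.1 = v => hv (h ▸ w.2)
    rw [this, Set.ncard_singleton]

/-- For a tree `T` on `n` vertices and `S ⊆ V(T)` with `|S| = d`, the shadow graph `T_S`
has exactly `k·(k-1)^{n+d-1-deg(S)}·(k-2)^{deg(S)-int(S)}·(k-3)^{int(S)}` proper
`k`-colorings. -/
theorem tree_multi_shadow_chromatic {V : Type} [Fintype V] (T : SimpleGraph V)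
    (hT : T.IsTree) (n : ℕ) (hn : Fintype.card V = n)
    (S : Finset V) (d : ℕ) (hd : S.card = d) (k : ℕ) :
    numColorings (multiShadow T S) k =
      k * (k - 1) ^ (n + d - 1 - degSum T S) *
        (k - 2) ^ (degSum T S - intEdges T S) * (k - 3) ^ (intEdges T S) := by
  classical
  subst hn hd
  rw [← Nat.card_eq_fintype_card]
  exact hT.numColorings_of_isCliqueBlowup (isCliqueBlowup_multiShadow T S)
    (ncard_preimage_multiShadowProj S) k
end

section
/- Let G be a finite simple graph and let H' be a connected graph, H a graph with a connected component isomorphic to H'. Writing N_H(G,k) for the number of induced copies of H in the coloring graph C_k(G), we have n_{H'}(H)·N_H(G,k) = N_{H'}(G,k)·N_{H∖H'}(G,k) − Σ_{U ∈ J(H', H∖H')∖{H}} f_U(H', H∖H')·N_U(G,k), where n_{H'}(H) is the number of components of H isomorphic to H', J(A,B) is the set of (isomorphism classes of) graphs whose vertex set is covered by an induced copy of A and an induced copy of B, and f_U(A,B) counts ordered pairs (V_A, V_B) of vertex subsets of U with V_A ∪ V_B = V(U), U[V_A] ≅ A, and U[V_B] ≅ B. -/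
/-- The number of induced copies of `H` in `X` (vertex subsets inducing a graph
isomorphic to `H`). -/
noncomputable def numInduced {W β : Type} (X : SimpleGraph W) (H : SimpleGraph β) : ℕ :=
  Nat.card {s : Set W // Nonempty ((X.induce s) ≃g H)}

/-- `U ∈ J(A, B)`: the vertex set of `U` is covered by an induced copy of `A` and an
induced copy of `B`. -/
def memJ {γ α β : Type} (U : SimpleGraph γ) (A : SimpleGraph α) (B : SimpleGraph β) :
    Prop :=
  ∃ VA VB : Set γ, VA ∪ VB = Set.univ ∧
    Nonempty ((U.induce VA) ≃g A) ∧ Nonempty ((U.induce VB) ≃g B)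

/-- `f_U(A, B)`: the number of ordered pairs `(V_A, V_B)` of vertex subsets of `U`
covering `V(U)` with `U[V_A] ≅ A` and `U[V_B] ≅ B`. -/
noncomputable def coverPairs {γ α β : Type} (U : SimpleGraph γ) (A : SimpleGraph α)
    (B : SimpleGraph β) : ℕ :=
  Nat.card {p : Set γ × Set γ //
    p.1 ∪ p.2 = Set.univ ∧
    Nonempty ((U.induce p.1) ≃g A) ∧ Nonempty ((U.induce p.2) ≃g B)}

/-- `n_{A}(H)`: the number of connected components of `H` isomorphic (as an induced
subgraph of `H`) to `A`. -/
noncomputable def numCompsIso {β α : Type} (H : SimpleGraph β) (A : SimpleGraph α) : ℕ :=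
  Nat.card {c : H.ConnectedComponent // Nonempty ((H.induce c.supp) ≃g A)}

/-!
Count the ordered pairs `(S₁, S₂)` of vertex sets of the host graph `X` with `X[S₁] ≅ H₁` and
`X[S₂] ≅ H₂` according to their union `S`: those with union `S` are exactly the covers counted by
`f_{X[S]}(H₁, H₂)`. If this number is nonzero then `X[S]` lies in `J(H₁, H₂)`, so it is isomorphic
either to `H₁ ⊕ H₂` or to exactly one `U i`; grouping the sets `S` by this isomorphism type turns
the sum into the right-hand side. The remaining point is `f_{H₁ ⊕ H₂}(H₁, H₂) = n_{H₁}(H₁ ⊕ H₂)`: by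
counting vertices and then edges, a cover `(S₁, S₂)` of `H₁ ⊕ H₂` has `S₂ = S₁ᶜ` and no edge leaves
`S₁`, so the connected set `S₁` is a component; conversely, deleting any component isomorphic to
`H₁` leaves a copy of `H₂`. No property of coloring graphs is used: the identity holds in every
finite host graph.
-/

namespace SimpleGraph

variable {α β γ : Type*} {X : SimpleGraph α} {Y : SimpleGraph β}

def Iso.induceImage (e : X ≃g Y) (s : Set α) : X.induce s ≃g Y.induce (e '' s) :=
  e.induce e.injective.injOn.bijOn_image

lemma Iso.nonempty_induce_image_iso_iff (e : X ≃g Y) (s : Set α) (A : SimpleGraph γ) :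
    Nonempty (Y.induce (e '' s) ≃g A) ↔ Nonempty (X.induce s ≃g A) :=
  ⟨fun ⟨f⟩ => ⟨(e.induceImage s).trans f⟩, fun ⟨f⟩ => ⟨(e.induceImage s).symm.trans f⟩⟩

def induceCongr (X : SimpleGraph α) {s t : Set α} (h : s = t) : X.induce s ≃g X.induce t :=
  Iso.refl.induce (h ▸ Set.bijOn_id s)

noncomputable def induceInduceIso (X : SimpleGraph α) (s : Set α) (t : Set s) :
    (X.induce s).induce t ≃g X.induce (Subtype.val '' t) where
  toEquiv := Equiv.Set.image Subtype.val t Subtype.val_injective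
  map_rel_iff' := by simp [Equiv.Set.image, Equiv.Set.imageOfInjOn]

lemma nonempty_induce_induce_iso_iff (X : SimpleGraph α) (s : Set α) (t : Set s)
    (A : SimpleGraph γ) :
    Nonempty ((X.induce s).induce t ≃g A) ↔ Nonempty (X.induce (Subtype.val '' t) ≃g A) :=
  ⟨fun ⟨f⟩ => ⟨(X.induceInduceIso s t).symm.trans f⟩,
    fun ⟨f⟩ => ⟨(X.induceInduceIso s t).trans f⟩⟩

def AdjClosed (X : SimpleGraph α) (s : Set α) : Prop :=
  ∀ ⦃a b⦄, X.Adj a b → (a ∈ s ↔ b ∈ s)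

lemma AdjClosed.mem_iff_of_reachable {s : Set α} (hs : X.AdjClosed s) {a b : α}
    (h : X.Reachable a b) : a ∈ s ↔ b ∈ s := by
  obtain ⟨w⟩ := h
  induction w with
  | nil => rfl
  | cons hadj _ ih => exact (hs hadj).trans ih

lemma ConnectedComponent.adjClosed_supp (c : X.ConnectedComponent) : X.AdjClosed c.supp :=
  fun _ _ h => c.mem_supp_congr_adj h

lemma AdjClosed.exists_supp_eq {s : Set α} (hs : X.AdjClosed s) (hconn : (X.induce s).Connected) :
    ∃ c : X.ConnectedComponent, c.supp = s := by
  refine (ConnectedComponent.maximal_connected_induce_iff s).mp ⟨hconn, fun t ht hst u hu => ?_⟩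
  obtain ⟨⟨v, hv⟩⟩ := hconn.nonempty
  have hreach : X.Reachable u v :=
    (ht.preconnected ⟨u, hu⟩ ⟨v, hst hv⟩).map (Embedding.induce t).toHom
  exact (hs.mem_iff_of_reachable hreach).mpr hv

open scoped Classical in
noncomputable def induceSumComplIso {s : Set α} (hs : X.AdjClosed s) :
    X.induce s ⊕g X.induce sᶜ ≃g X where
  toEquiv := Equiv.Set.sumCompl s
  map_rel_iff' := by
    rintro (⟨a, ha⟩ | ⟨a, ha⟩) (⟨b, hb⟩ | ⟨b, hb⟩)
    · simp
    · simpa using fun h => hb ((hs h).mp ha)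
    · simpa using fun h => ha ((hs h).mpr hb)
    · simp

noncomputable def induceSumDiffIso {s t : Set α} (hs : X.AdjClosed s) (hst : s ⊆ t) :
    X.induce s ⊕g X.induce (t \ s) ≃g X.induce t :=
  have hs' : (X.induce t).AdjClosed (Subtype.val ⁻¹' s) := fun _ _ h => hs h
  (Iso.sumCongr
    ((X.induceInduceIso t _).trans (X.induceCongr (by simpa [Subtype.image_preimage_coe])))
    ((X.induceInduceIso t _).trans (X.induceCongr (by
      rw [← Set.preimage_compl, Subtype.image_preimage_coe, Set.sdiff_eq])))).symm.trans
    (induceSumComplIso hs')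

lemma nonempty_induce_compl_iso {s t : Set α} (hs : X.AdjClosed s) (ht : X.AdjClosed t)
    (hst : Disjoint s t) (e : X.induce s ≃g X.induce t) :
    Nonempty (X.induce sᶜ ≃g X.induce tᶜ) := by
  have hdiff : sᶜ \ t = tᶜ \ s := by rw [Set.sdiff_eq, Set.sdiff_eq, Set.inter_comm]
  exact ⟨(induceSumDiffIso ht hst.subset_compl_left).symm.trans <|
    (Iso.sumCongr e.symm (X.induceCongr hdiff)).trans
      (induceSumDiffIso hs hst.subset_compl_right)⟩

lemma eq_of_le_of_iso [Finite α] {X' : SimpleGraph α} (hle : X ≤ X') (e : X ≃g X') : X = X' := by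
  apply SimpleGraph.edgeSet_injective
  refine Set.eq_of_subset_of_ncard_le (SimpleGraph.edgeSet_mono hle) ?_ (Set.toFinite _)
  rw [← Nat.card_coe_set_eq, ← Nat.card_coe_set_eq]
  exact (Nat.card_congr e.mapEdgeSet.symm).le

end SimpleGraph

lemma Set.eq_compl_of_union_eq_univ_of_ncard_add_le {α : Type*} [Finite α] {s t : Set α}
    (hst : s ∪ t = Set.univ) (hcard : s.ncard + t.ncard ≤ Nat.card α) : t = sᶜ := by
  have hinter : s ∩ t = ∅ := by
    have := Set.ncard_union_add_ncard_inter s t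
    rw [hst, Set.ncard_univ] at this
    exact (Set.ncard_eq_zero).mp (by omega)
  exact (isCompl_iff.mpr ⟨Set.disjoint_iff_inter_eq_empty.mpr hinter,
    codisjoint_iff.mpr hst⟩).compl_eq.symm

namespace SimpleGraph

variable {α : Type*}

lemma adjClosed_of_iso_sum [Finite α] {X : SimpleGraph α} {s : Set α}
    (e : X ≃g X.induce s ⊕g X.induce sᶜ) : X.AdjClosed s := by
  classical
  -- The image of `X[s] ⊕ X[sᶜ]` in `X` is a subgraph with as many edges, hence all of `X`.
  let f := Equiv.Set.sumCompl s
  have hle : (X.induce s ⊕g X.induce sᶜ).map f.toEmbedding ≤ X := by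
    rw [map_le_iff_le_comap]
    rintro (a | a) (b | b) h <;> simp_all [f]
  have hX := eq_of_le_of_iso hle ((Iso.map f _).symm.trans e.symm)
  intro a b hab
  rw [← hX, map_adj] at hab
  obtain ⟨a', b', h, rfl, rfl⟩ := hab
  rcases a' with a' | a' <;> rcases b' with b' | b'
  · exact iff_of_true a'.2 b'.2
  · simp at h
  · simp at h
  · exact iff_of_false a'.2 b'.2

variable {β₁ β₂ : Type} (H₁ : SimpleGraph β₁) (H₂ : SimpleGraph β₂)

lemma adjClosed_range_inl : (H₁ ⊕g H₂).AdjClosed (Set.range Sum.inl) := by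
  rintro (a | a) (b | b) h <;> simp_all

noncomputable def induceRangeInlIso : (H₁ ⊕g H₂).induce (Set.range Sum.inl) ≃g H₁ :=
  Embedding.sumInl.isoInduceRange.symm

noncomputable def induceRangeInrIso : (H₁ ⊕g H₂).induce (Set.range Sum.inr) ≃g H₂ :=
  Embedding.sumInr.isoInduceRange.symm

variable {H₁ H₂}

lemma nonempty_induce_compl_supp_iso (c : (H₁ ⊕g H₂).ConnectedComponent)
    (hc : Nonempty ((H₁ ⊕g H₂).induce c.supp ≃g H₁)) :
    Nonempty ((H₁ ⊕g H₂).induce c.suppᶜ ≃g H₂) := by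
  obtain ⟨e⟩ := hc
  have hconn : H₁.Connected := e.connected_iff.mp c.connected_toSimpleGraph
  obtain ⟨c₀, hc₀⟩ := (adjClosed_range_inl H₁ H₂).exists_supp_eq
    ((induceRangeInlIso H₁ H₂).connected_iff.mpr hconn)
  have e₀ : (H₁ ⊕g H₂).induce c₀.supp ≃g H₁ := (induceCongr _ hc₀).trans (induceRangeInlIso H₁ H₂)
  have hcompl : c₀.suppᶜ = Set.range Sum.inr := hc₀ ▸ Set.compl_range_inl
  obtain ⟨e'⟩ : Nonempty ((H₁ ⊕g H₂).induce c.suppᶜ ≃g (H₁ ⊕g H₂).induce c₀.suppᶜ) := by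
    rcases eq_or_ne c c₀ with rfl | hne
    · exact ⟨Iso.refl⟩
    · exact nonempty_induce_compl_iso c.adjClosed_supp c₀.adjClosed_supp
        (pairwise_disjoint_supp_connectedComponent _ hne) (e.trans e₀.symm)
  exact ⟨e'.trans ((induceCongr _ hcompl).trans (induceRangeInrIso H₁ H₂))⟩

lemma exists_supp_eq_of_union_eq_univ [Finite β₁] [Finite β₂] (hconn : H₁.Connected)
    {s t : Set (β₁ ⊕ β₂)} (hst : s ∪ t = Set.univ) (e₁ : (H₁ ⊕g H₂).induce s ≃g H₁)
    (e₂ : (H₁ ⊕g H₂).induce t ≃g H₂) :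
    ∃ c : (H₁ ⊕g H₂).ConnectedComponent, c.supp = s ∧ t = c.suppᶜ := by
  obtain rfl : t = sᶜ := Set.eq_compl_of_union_eq_univ_of_ncard_add_le hst <| by
    rw [← Nat.card_coe_set_eq, ← Nat.card_coe_set_eq, Nat.card_congr e₁.toEquiv,
      Nat.card_congr e₂.toEquiv, Nat.card_sum]
  have hs : (H₁ ⊕g H₂).AdjClosed s := adjClosed_of_iso_sum (e₁.sumCongr e₂).symm
  obtain ⟨c, hc⟩ := hs.exists_supp_eq (e₁.connected_iff.mpr hconn)
  exact ⟨c, hc, hc ▸ rfl⟩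

lemma coverPairs_sum_eq_numCompsIso [Finite β₁] [Finite β₂] (hconn : H₁.Connected) :
    coverPairs (H₁ ⊕g H₂) H₁ H₂ = numCompsIso (H₁ ⊕g H₂) H₁ := by
  refine (Nat.card_eq_of_bijective (fun c => ⟨(c.1.supp, c.1.suppᶜ), Set.union_compl_self _,
    c.2, nonempty_induce_compl_supp_iso c.1 c.2⟩) ⟨?_, ?_⟩).symm
  · rintro ⟨c, _⟩ ⟨c', _⟩ h
    exact Subtype.ext (ConnectedComponent.supp_injective (congrArg (fun p => p.1.1) h))
  · rintro ⟨⟨s, t⟩, hst, ⟨e₁⟩, ⟨e₂⟩⟩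
    obtain ⟨c, rfl, rfl⟩ := exists_supp_eq_of_union_eq_univ hconn hst e₁ e₂
    exact ⟨⟨c, ⟨e₁⟩⟩, rfl⟩

end SimpleGraph

section Counting

open SimpleGraph

variable {α β γ γ' W : Type}

def CoverPair (U : SimpleGraph γ) (A : SimpleGraph α) (B : SimpleGraph β) : Type :=
  {p : Set γ × Set γ // p.1 ∪ p.2 = Set.univ ∧
    Nonempty ((U.induce p.1) ≃g A) ∧ Nonempty ((U.induce p.2) ≃g B)}

def SimpleGraph.Iso.coverPairEquiv {U : SimpleGraph γ} {U' : SimpleGraph γ'} (e : U ≃g U')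
    (A : SimpleGraph α) (B : SimpleGraph β) : CoverPair U A B ≃ CoverPair U' A B :=
  ((Equiv.Set.congr e.toEquiv).prodCongr (Equiv.Set.congr e.toEquiv)).subtypeEquiv
    fun ⟨P, Q⟩ => by
      have himage : ∀ S : Set γ, e '' S = Set.univ ↔ S = Set.univ := fun S => by
        rw [← Set.image_univ_of_surjective e.surjective, Set.image_eq_image e.injective]
      change _ ↔ e '' P ∪ e '' Q = Set.univ ∧ Nonempty (U'.induce (e '' P) ≃g A) ∧
        Nonempty (U'.induce (e '' Q) ≃g B)
      rw [← Set.image_union, himage, e.nonempty_induce_image_iso_iff,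
        e.nonempty_induce_image_iso_iff]

lemma coverPairs_congr {U : SimpleGraph γ} {U' : SimpleGraph γ'} (e : U ≃g U')
    (A : SimpleGraph α) (B : SimpleGraph β) : coverPairs U A B = coverPairs U' A B :=
  Nat.card_congr (e.coverPairEquiv A B)

lemma coverPairs_induce (X : SimpleGraph W) (s : Set W) (A : SimpleGraph α)
    (B : SimpleGraph β) :
    coverPairs (X.induce s) A B = Nat.card {p : Set W × Set W //
      (Nonempty ((X.induce p.1) ≃g A) ∧ Nonempty ((X.induce p.2) ≃g B)) ∧ p.1 ∪ p.2 = s} := by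
  have hval : Function.Injective (Set.image (Subtype.val : s → W)) :=
    Set.image_injective.mpr Subtype.val_injective
  refine Nat.card_eq_of_bijective (fun q => ⟨(Subtype.val '' q.1.1, Subtype.val '' q.1.2),
    ⟨(X.nonempty_induce_induce_iso_iff s _ A).mp q.2.2.1,
      (X.nonempty_induce_induce_iso_iff s _ B).mp q.2.2.2⟩,
    by rw [← Set.image_union, q.2.1, Set.image_univ, Subtype.range_coe]⟩) ⟨?_, ?_⟩
  · rintro ⟨⟨t₁, t₂⟩, _⟩ ⟨⟨t₁', t₂'⟩, _⟩ h
    obtain ⟨h₁, h₂⟩ := Prod.mk.inj (congrArg Subtype.val h)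
    exact Subtype.ext (Prod.ext (hval h₁) (hval h₂))
  · rintro ⟨⟨P, Q⟩, ⟨hP, hQ⟩, hPQ⟩
    have hP' : P ⊆ Set.range (Subtype.val : s → W) := by
      rw [Subtype.range_coe, ← hPQ]; exact Set.subset_union_left
    have hQ' : Q ⊆ Set.range (Subtype.val : s → W) := by
      rw [Subtype.range_coe, ← hPQ]; exact Set.subset_union_right
    obtain ⟨t₁, rfl⟩ := Set.subset_range_iff_exists_image_eq.mp hP'
    obtain ⟨t₂, rfl⟩ := Set.subset_range_iff_exists_image_eq.mp hQ'
    refine ⟨⟨(t₁, t₂), hval ?_, (X.nonempty_induce_induce_iso_iff s _ A).mpr hP,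
      (X.nonempty_induce_induce_iso_iff s _ B).mpr hQ⟩, rfl⟩
    rw [Set.image_union, hPQ, Set.image_univ, Subtype.range_coe]

lemma numInduced_mul_numInduced [Fintype W] (X : SimpleGraph W) (A : SimpleGraph α)
    (B : SimpleGraph β) :
    numInduced X A * numInduced X B = ∑ s : Set W, coverPairs (X.induce s) A B := by
  rw [numInduced, numInduced, ← Nat.card_prod, ← Nat.card_congr Equiv.subtypeProdEquivProd,
    ← Nat.card_congr (Equiv.sigmaFiberEquiv fun p : {p : Set W × Set W // _} => p.1.1 ∪ p.1.2),
    Nat.card_sigma]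
  exact Finset.sum_congr rfl fun s _ => ((coverPairs_induce X s A B).trans
    (Nat.card_congr (Equiv.subtypeSubtypeEquivSubtypeInter _ _).symm)).symm

open scoped Classical in
lemma sum_ite_nonempty_iso [Fintype W] (X : SimpleGraph W) (K : SimpleGraph α) (n : ℕ) :
    ∑ s : Set W, (if Nonempty (X.induce s ≃g K) then n else 0) = n * numInduced X K := by
  rw [Finset.sum_ite, Finset.sum_const_zero, add_zero, Finset.sum_const, smul_eq_mul, mul_comm,
    numInduced, Nat.card_eq_fintype_card, Fintype.card_subtype]

end Counting

section Recursion

open SimpleGraph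

variable {β₁ β₂ γ ι W : Type} {H₁ : SimpleGraph β₁} {H₂ : SimpleGraph β₂}
  {m : ι → ℕ} {U : ∀ i, SimpleGraph (Fin (m i))}

lemma coverPairs_eq_zero_of_not_iso [Finite γ] (Y : SimpleGraph γ)
    (hcomplete : ∀ (m' : ℕ) (U' : SimpleGraph (Fin m')), memJ U' H₁ H₂ →
      IsEmpty (U' ≃g (H₁ ⊕g H₂)) → ∃ i, Nonempty (U' ≃g U i))
    (hH : ¬Nonempty (Y ≃g H₁ ⊕g H₂)) (hU : ∀ i, ¬Nonempty (Y ≃g U i)) :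
    coverPairs Y H₁ H₂ = 0 := by
  have := Fintype.ofFinite γ
  let e := Y.overFinIso rfl
  refine Nat.card_eq_zero.mpr (Or.inl ⟨fun p => ?_⟩)
  obtain ⟨⟨s, t⟩, hst, hs, ht⟩ := e.coverPairEquiv H₁ H₂ p
  obtain ⟨i, ⟨f⟩⟩ := hcomplete _ _ ⟨s, t, hst, hs, ht⟩ ⟨fun f => hH ⟨e.trans f⟩⟩
  exact hU i ⟨e.trans f⟩

open scoped Classical in
lemma coverPairs_eq_ite_add_sum_ite [Fintype ι] [Finite γ] (Y : SimpleGraph γ)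
    (hconn : H₁.Connected)
    (hnotH : ∀ i, IsEmpty ((U i) ≃g (H₁ ⊕g H₂)))
    (hdistinct : ∀ i j, i ≠ j → IsEmpty ((U i) ≃g (U j)))
    (hcomplete : ∀ (m' : ℕ) (U' : SimpleGraph (Fin m')), memJ U' H₁ H₂ →
      IsEmpty (U' ≃g (H₁ ⊕g H₂)) → ∃ i, Nonempty (U' ≃g U i)) :
    coverPairs Y H₁ H₂ =
      (if Nonempty (Y ≃g H₁ ⊕g H₂) then numCompsIso (H₁ ⊕g H₂) H₁ else 0) +
        ∑ i, if Nonempty (Y ≃g U i) then coverPairs (U i) H₁ H₂ else 0 := by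
  by_cases hH : Nonempty (Y ≃g H₁ ⊕g H₂)
  · obtain ⟨e⟩ := hH
    have : Finite (β₁ ⊕ β₂) := Finite.of_equiv γ e.toEquiv
    have : Finite β₁ := Finite.of_injective (Sum.inl : β₁ → β₁ ⊕ β₂) Sum.inl_injective
    have : Finite β₂ := Finite.of_injective (Sum.inr : β₂ → β₁ ⊕ β₂) Sum.inr_injective
    rw [if_pos ⟨e⟩,
      Finset.sum_eq_zero fun i _ => if_neg fun ⟨f⟩ => (hnotH i).false (f.symm.trans e), add_zero,
      coverPairs_congr e, coverPairs_sum_eq_numCompsIso hconn]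
  rw [if_neg hH, zero_add]
  by_cases hU : ∃ i, Nonempty (Y ≃g U i)
  · obtain ⟨i, ⟨e⟩⟩ := hU
    rw [Finset.sum_eq_single i (fun j _ hji => if_neg fun ⟨f⟩ =>
      (hdistinct i j hji.symm).false (e.symm.trans f)) (by simp), if_pos ⟨e⟩, coverPairs_congr e]
  · simp only [not_exists] at hU
    rw [coverPairs_eq_zero_of_not_iso Y hcomplete hH hU,
      Finset.sum_eq_zero fun i _ => if_neg (hU i)]

theorem numInduced_mul_numInduced_eq [Fintype ι] [Fintype W] (X : SimpleGraph W)
    (hconn : H₁.Connected)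
    (hnotH : ∀ i, IsEmpty ((U i) ≃g (H₁ ⊕g H₂)))
    (hdistinct : ∀ i j, i ≠ j → IsEmpty ((U i) ≃g (U j)))
    (hcomplete : ∀ (m' : ℕ) (U' : SimpleGraph (Fin m')), memJ U' H₁ H₂ →
      IsEmpty (U' ≃g (H₁ ⊕g H₂)) → ∃ i, Nonempty (U' ≃g U i)) :
    numInduced X H₁ * numInduced X H₂ =
      numCompsIso (H₁ ⊕g H₂) H₁ * numInduced X (H₁ ⊕g H₂) +
        ∑ i, coverPairs (U i) H₁ H₂ * numInduced X (U i) := by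
  classical
  rw [numInduced_mul_numInduced, Finset.sum_congr rfl fun s _ =>
    coverPairs_eq_ite_add_sum_ite (X.induce s) hconn hnotH hdistinct hcomplete,
    Finset.sum_add_distrib, Finset.sum_comm, sum_ite_nonempty_iso]
  simp only [sum_ite_nonempty_iso]

end Recursion

theorem disconnected_recursion_general {V β₁ β₂ : Type} [Fintype V]
    (G : SimpleGraph V) (H₁ : SimpleGraph β₁) (H₂ : SimpleGraph β₂)
    (hconn : H₁.Connected) (k : ℕ)
    (ι : Type) [Fintype ι] (m : ι → ℕ) (U : ∀ i, SimpleGraph (Fin (m i)))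
    (hnotH : ∀ i, IsEmpty ((U i) ≃g (H₁ ⊕g H₂)))
    (hdistinct : ∀ i j, i ≠ j → IsEmpty ((U i) ≃g (U j)))
    (hcomplete : ∀ (m' : ℕ) (U' : SimpleGraph (Fin m')), memJ U' H₁ H₂ →
      IsEmpty (U' ≃g (H₁ ⊕g H₂)) → ∃ i, Nonempty (U' ≃g U i)) :
    (numCompsIso (H₁ ⊕g H₂) H₁ : ℤ) * numInduced (coloringGraph G k) (H₁ ⊕g H₂) =
      (numInduced (coloringGraph G k) H₁ : ℤ) * numInduced (coloringGraph G k) H₂ -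
        ∑ i : ι, (coverPairs (U i) H₁ H₂ : ℤ) * numInduced (coloringGraph G k) (U i) := by
  classical
  rw [eq_sub_iff_add_eq]
  exact_mod_cast (numInduced_mul_numInduced_eq (coloringGraph G k) hconn hnotH hdistinct
    hcomplete).symm

/-- Recursion for counting induced copies of a disconnected graph `H = H₁ ⊕ H₂`
(`H₁` a connected component) in the coloring graph `C_k(G)`:
`n_{H₁}(H)·N_H = N_{H₁}·N_{H₂} − Σ_{U ∈ J(H₁,H₂)∖{H}} f_U(H₁,H₂)·N_U`,
where the family `U i` enumerates, up to isomorphism and without repetition, the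
graphs of `J(H₁, H₂)` other than `H` itself. -/
theorem disconnected_recursion {V β₁ β₂ : Type} [Fintype V] [Fintype β₁] [Fintype β₂]
    (G : SimpleGraph V) (H₁ : SimpleGraph β₁) (H₂ : SimpleGraph β₂)
    (hconn : H₁.Connected) (k : ℕ)
    (ι : Type) [Fintype ι] (m : ι → ℕ) (U : ∀ i, SimpleGraph (Fin (m i)))
    (hJ : ∀ i, memJ (U i) H₁ H₂)
    (hnotH : ∀ i, IsEmpty ((U i) ≃g (H₁ ⊕g H₂)))
    (hdistinct : ∀ i j, i ≠ j → IsEmpty ((U i) ≃g (U j)))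
    (hcomplete : ∀ (m' : ℕ) (U' : SimpleGraph (Fin m')), memJ U' H₁ H₂ →
      IsEmpty (U' ≃g (H₁ ⊕g H₂)) → ∃ i, Nonempty (U' ≃g U i)) :
    (numCompsIso (H₁ ⊕g H₂) H₁ : ℤ) * numInduced (coloringGraph G k) (H₁ ⊕g H₂) =
      (numInduced (coloringGraph G k) H₁ : ℤ) * numInduced (coloringGraph G k) H₂ -
        ∑ i : ι, (coverPairs (U i) H₁ H₂ : ℤ) * numInduced (coloringGraph G k) (U i) :=
  disconnected_recursion_general G H₁ H₂ hconn k ι m U hnotH hdistinct hcomplete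
end
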